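/- arXiv:1110.0108 — 8 statements merged into one kernel-verified Lean document; each statement's English description precedes it below -/
import Mathlib

section
/- For every natural number n, the oscillator wave function φ_n is twice differentiable on ℝ and satisfies the differential equation φ_n''(x) = (x² − (2n+1)) φ_n(x) for all real x. -/
open Real Filter MeasureTheory

/-- Physicists' Hermite polynomial `H_n(x) = (-1)^n e^{x²} (d^n/dx^n) e^{-x²}`. -/
noncomputable def physHermite (n : ℕ) (x : ℝ) : ℝ :=
  (-1 : ℝ) ^ n * Real.exp (x ^ 2) * iteratedDeriv n (fun t : ℝ => Real.exp (-t ^ 2)) x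

/-- Normalizing constant `h_n = √π 2^n n!`. -/
noncomputable def hNorm (n : ℕ) : ℝ := Real.sqrt Real.pi * 2 ^ n * (n.factorial : ℝ)

/-- Oscillator wave function `φ_n(x) = h_n^{-1/2} e^{-x²/2} H_n(x)`. -/
noncomputable def osc (n : ℕ) (x : ℝ) : ℝ :=
  hNorm n ^ (-(1 : ℝ) / 2) * Real.exp (-x ^ 2 / 2) * physHermite n x

/-- Airy function `Ai(x) = π⁻¹ lim_{R→∞} ∫₀^R cos(t³/3 + xt) dt`. -/
noncomputable def Ai (x : ℝ) : ℝ :=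
  Real.pi⁻¹ *
    limUnder Filter.atTop (fun R : ℝ => ∫ t in (0 : ℝ)..R, Real.cos (t ^ 3 / 3 + x * t))

/-- Scaling constant `τ_N = 2^{-1/2} N^{-1/6}`. -/
noncomputable def tauN (N : ℕ) : ℝ := (2 : ℝ) ^ (-(1 : ℝ) / 2) * (N : ℝ) ^ (-(1 : ℝ) / 6)

/-- `Δ_N = (√(2N+1) - √(2N-1))/τ_N`. -/
noncomputable def DeltaN (N : ℕ) : ℝ :=
  (Real.sqrt (2 * N + 1) - Real.sqrt (2 * N - 1)) / tauN N

/-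
Writing `G(t) = e^{-t²}`, the identity `G' = -2tG` differentiated `n + 1` times gives
`G^{(n+2)} = -2x G^{(n+1)} - 2(n+1) G^{(n)}`, i.e. the three-term recurrence
`H_{n+2} = 2x H_{n+1} - 2(n+1) H_n`. Together with `H_n' = 2x H_n - H_{n+1}`, which is the product
rule applied to the definition, this yields the Appell relation `H_{n+1}' = 2(n+1) H_n` and hence
Hermite's equation `H_n'' = 2x H_n' - 2n H_n`. Finally, the gauge transformation
`ψ = c e^{-x²/2} H` turns any solution of Hermite's equation with parameter `ν` into a solution of
`ψ'' = (x² - (2ν+1)) ψ`.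
-/

lemma contDiff_exp_neg_sq : ContDiff ℝ ⊤ (fun t : ℝ => exp (-t ^ 2)) :=
  contDiff_exp.comp (contDiff_id.pow 2).neg

lemma hasDerivAt_iteratedDeriv_exp_neg_sq (n : ℕ) (x : ℝ) :
    HasDerivAt (iteratedDeriv n fun t : ℝ => exp (-t ^ 2))
      (iteratedDeriv (n + 1) (fun t : ℝ => exp (-t ^ 2)) x) x := by
  rw [iteratedDeriv_succ]
  exact (contDiff_exp_neg_sq.differentiable_iteratedDeriv n
    (WithTop.coe_lt_top _)).differentiableAt.hasDerivAt

lemma iteratedDeriv_exp_neg_sq_succ_succ (n : ℕ) (x : ℝ) :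
    iteratedDeriv (n + 2) (fun t : ℝ => exp (-t ^ 2)) x =
      -2 * x * iteratedDeriv (n + 1) (fun t : ℝ => exp (-t ^ 2)) x
        - 2 * (n + 1) * iteratedDeriv n (fun t : ℝ => exp (-t ^ 2)) x := by
  set G : ℕ → ℝ → ℝ := fun k => iteratedDeriv k fun t : ℝ => exp (-t ^ 2)
  have hG (k : ℕ) (y : ℝ) : HasDerivAt (G k) (G (k + 1) y) y :=
    hasDerivAt_iteratedDeriv_exp_neg_sq k y
  suffices ∀ n x, G (n + 2) x = -2 * x * G (n + 1) x - 2 * (n + 1) * G n x from this n x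
  intro n
  induction n with
  | zero =>
    intro x
    have hG₁ (y : ℝ) : G 1 y = -2 * y * G 0 y :=
      (hG 0 y).unique <| ((hasDerivAt_pow 2 y).fun_neg.exp).congr_deriv (by simp [G]; ring)
    have h : HasDerivAt (fun y => -2 * y * G 0 y) (-2 * G 0 x + -2 * x * G 1 x) x :=
      (((hasDerivAt_id' x).const_mul (-2 : ℝ)).fun_mul (hG 0 x)).congr_deriv (by ring)
    refine ((hG 1 x).unique (h.congr_of_eventuallyEq (.of_forall hG₁))).trans ?_
    rw [hG₁]
    push_cast
    ring
  | succ n ih =>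
    intro x
    have h : HasDerivAt (fun y => -2 * y * G (n + 1) y - 2 * (n + 1) * G n y)
        (-2 * G (n + 1) x + -2 * x * G (n + 2) x - 2 * (n + 1) * G (n + 1) x) x :=
      ((((hasDerivAt_id' x).const_mul (-2 : ℝ)).fun_mul (hG (n + 1) x)).fun_sub
        ((hG n x).const_mul (2 * ((n : ℝ) + 1)))).congr_deriv (by ring)
    refine ((hG (n + 2) x).unique (h.congr_of_eventuallyEq (.of_forall ih))).trans ?_
    push_cast
    ring

lemma hasDerivAt_physHermite (n : ℕ) (x : ℝ) :
    HasDerivAt (physHermite n) (2 * x * physHermite n x - physHermite (n + 1) x) x := by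
  have hexp : HasDerivAt (fun y : ℝ => exp (y ^ 2)) (exp (x ^ 2) * (2 * x)) x := by
    simpa using (hasDerivAt_pow 2 x).exp
  refine ((hexp.const_mul ((-1 : ℝ) ^ n)).fun_mul
    (hasDerivAt_iteratedDeriv_exp_neg_sq n x)).congr_deriv ?_
  simp only [physHermite, pow_succ]
  ring

lemma physHermite_succ_succ (n : ℕ) (x : ℝ) :
    physHermite (n + 2) x = 2 * x * physHermite (n + 1) x - 2 * (n + 1) * physHermite n x := by
  rw [physHermite, iteratedDeriv_exp_neg_sq_succ_succ]
  simp only [physHermite, pow_succ]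
  ring

lemma hasDerivAt_physHermite_succ (n : ℕ) (x : ℝ) :
    HasDerivAt (physHermite (n + 1)) (2 * (n + 1) * physHermite n x) x := by
  refine (hasDerivAt_physHermite (n + 1) x).congr_deriv ?_
  rw [physHermite_succ_succ]
  ring

lemma hasDerivAt_deriv_physHermite (n : ℕ) (x : ℝ) :
    HasDerivAt (fun y => 2 * y * physHermite n y - physHermite (n + 1) y)
      (2 * x * (2 * x * physHermite n x - physHermite (n + 1) x) - 2 * n * physHermite n x) x :=
  ((((hasDerivAt_id' x).const_mul 2).fun_mul (hasDerivAt_physHermite n x)).fun_sub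
    (hasDerivAt_physHermite_succ n x)).congr_deriv (by ring)

section HermiteGauge

variable {H H' : ℝ → ℝ}

lemma hasDerivAt_const_mul_exp_mul (c : ℝ) {x : ℝ} (hH : HasDerivAt H (H' x) x) :
    HasDerivAt (fun y => c * exp (-y ^ 2 / 2) * H y)
      (c * exp (-x ^ 2 / 2) * (H' x - x * H x)) x := by
  have hexp : HasDerivAt (fun y : ℝ => exp (-y ^ 2 / 2)) (exp (-x ^ 2 / 2) * -x) x :=
    ((hasDerivAt_pow 2 x).fun_neg.div_const 2).exp.congr_deriv (by simp; ring)
  exact ((hexp.const_mul c).fun_mul hH).congr_deriv (by ring)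

theorem weber_ode_of_hermite_ode (c ν : ℝ) (hH : ∀ x, HasDerivAt H (H' x) x)
    (hH' : ∀ x, HasDerivAt H' (2 * x * H' x - 2 * ν * H x) x) :
    Differentiable ℝ (fun y => c * exp (-y ^ 2 / 2) * H y) ∧
      Differentiable ℝ (deriv fun y => c * exp (-y ^ 2 / 2) * H y) ∧
      ∀ x, deriv (deriv fun y => c * exp (-y ^ 2 / 2) * H y) x =
        (x ^ 2 - (2 * ν + 1)) * (c * exp (-x ^ 2 / 2) * H x) := by
  have hψ' : deriv (fun y => c * exp (-y ^ 2 / 2) * H y) =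
      fun y => c * exp (-y ^ 2 / 2) * (H' y - y * H y) :=
    funext fun y => (hasDerivAt_const_mul_exp_mul c (hH y)).deriv
  have hψ'' (x : ℝ) : HasDerivAt (fun y => c * exp (-y ^ 2 / 2) * (H' y - y * H y))
      ((x ^ 2 - (2 * ν + 1)) * (c * exp (-x ^ 2 / 2) * H x)) x := by
    have hxH : HasDerivAt (fun y => y * H y) (H x + x * H' x) x :=
      ((hasDerivAt_id' x).fun_mul (hH x)).congr_deriv (by ring)
    exact (hasDerivAt_const_mul_exp_mul
      (H' := fun y => 2 * y * H' y - 2 * ν * H y - (H y + y * H' y)) c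
      ((hH' x).fun_sub hxH)).congr_deriv (by ring)
  refine ⟨fun x => (hasDerivAt_const_mul_exp_mul c (hH x)).differentiableAt, ?_, fun x => ?_⟩
  · rw [hψ']
    exact fun x => (hψ'' x).differentiableAt
  · rw [hψ']
    exact (hψ'' x).deriv

end HermiteGauge

/-- The oscillator wave function `φ_n` is twice differentiable and satisfies
`φ_n''(x) = (x² - (2n+1)) φ_n(x)`. -/
theorem oscillator_wave_function_ode (n : ℕ) :
    Differentiable ℝ (osc n) ∧ Differentiable ℝ (deriv (osc n)) ∧
    ∀ x : ℝ, deriv (deriv (osc n)) x = (x ^ 2 - (2 * n + 1)) * osc n x :=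
  weber_ode_of_hermite_ode (hNorm n ^ (-(1 : ℝ) / 2)) n (hasDerivAt_physHermite n)
    (hasDerivAt_deriv_physHermite n)
end

section
/- The Airy function Ai is twice differentiable on ℝ and satisfies the Airy differential equation Ai''(x) = x · Ai(x) for all real x. -/
open Real Filter MeasureTheory

open Complex Set Topology

/-!
Write `airyExp x z = exp (i (z³/3 + x z))`. Cauchy's theorem on the rectangle with corners
`0, R, R + i, i` moves `∫₀^R airyExp x t dt` to the line `Im z = 1`, where
`‖airyExp x (t + i)‖ = exp (1/3 - x - t²)` decays like a Gaussian, plus the segment `[0, i]`,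
on which `airyExp x` is real, so that it does not contribute to the real part; the right side of
the rectangle vanishes as `R → ∞`. Hence `π Ai x = Re ∫_{t > 0} airyExp x (t + i) dt`, and this
integral may be differentiated in `x` under the integral sign any number of times, each
derivative multiplying the integrand by `i z`. Integrating
`d/dt airyExp x (t + i) = i ((t + i)² + x) airyExp x (t + i)` over `t > 0` shows that
`∫ ((t + i)² + x) airyExp x (t + i) dt = i e^{1/3 - x}` is purely imaginary, and the real part
of this identity is the Airy equation.
-/

noncomputable def airyExp (x : ℝ) (z : ℂ) : ℂ := cexp (I * (z ^ 3 / 3 + x * z))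

lemma hasDerivAt_airyExp (x : ℝ) (z : ℂ) :
    HasDerivAt (airyExp x) (I * (z ^ 2 + x) * airyExp x z) z := by
  refine ((((hasDerivAt_pow 3 z).div_const 3).add
    ((hasDerivAt_id' z).const_mul (x : ℂ))).const_mul I).cexp.congr_deriv ?_
  norm_num [airyExp]
  ring

lemma differentiable_airyExp (x : ℝ) : Differentiable ℂ (airyExp x) :=
  fun z => (hasDerivAt_airyExp x z).differentiableAt

lemma hasDerivAt_airyExp_param (z : ℂ) (x : ℝ) :
    HasDerivAt (fun x : ℝ => airyExp x z) (I * z * airyExp x z) x := by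
  have h : HasDerivAt (fun x : ℝ => I * (z ^ 3 / 3 + x * z)) (I * z) x := by
    simpa using (((hasDerivAt_id x).ofReal_comp.mul_const z).const_add (z ^ 3 / 3)).const_mul I
  exact h.cexp.congr_deriv (by rw [airyExp]; ring)

lemma airyExp_ofReal (x t : ℝ) : airyExp x t = cexp ((t ^ 3 / 3 + x * t : ℝ) * I) := by
  rw [airyExp]; push_cast; ring_nf

lemma airyExp_ofReal_mul_I (x y : ℝ) : airyExp x (y * I) = Real.exp (y ^ 3 / 3 - x * y) := by
  rw [airyExp, ofReal_exp]; congr 1; push_cast; ring_nf; simp [I_sq]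

lemma norm_airyExp (x : ℝ) (z : ℂ) :
    ‖airyExp x z‖ = Real.exp (-(z ^ 3 / 3 + x * z).im) := by
  simp [airyExp, norm_exp, mul_re]

lemma norm_airyExp_ofReal_add_I (x t : ℝ) :
    ‖airyExp x (t + I)‖ = Real.exp (1 / 3 - x - t ^ 2) := by
  rw [norm_airyExp]
  congr 1
  simp only [pow_succ, pow_zero, one_mul, add_im, div_ofNat_im, mul_im, mul_re, add_re, ofReal_re,
    I_re, add_zero, ofReal_im, I_im, zero_add, mul_one, zero_mul]
  ring

lemma norm_airyExp_ofReal_add_mul_I (x R y : ℝ) :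
    ‖airyExp x (R + y * I)‖ = Real.exp (y ^ 3 / 3 - x * y - R ^ 2 * y) := by
  rw [norm_airyExp]
  congr 1
  simp only [pow_succ, pow_zero, one_mul, add_im, div_ofNat_im, mul_im, mul_re, add_re, ofReal_re,
    I_re, mul_zero, ofReal_im, I_im, mul_one, sub_self, add_zero, zero_add, zero_mul]
  ring

lemma integrableOn_add_one_pow_mul_exp_neg_sq (n : ℕ) :
    IntegrableOn (fun t : ℝ => (t + 1) ^ n * Real.exp (-t ^ 2)) (Ioi 0) := by
  have hpow : IntegrableOn (fun t : ℝ => t ^ n * Real.exp (-1 * t ^ 2)) (Ioi 0) := by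
    refine (integrableOn_rpow_mul_exp_neg_mul_sq one_pos (s := n)
      (by linarith [n.cast_nonneg (α := ℝ)])).congr_fun (fun t _ => ?_) measurableSet_Ioi
    simp
  have hexp : IntegrableOn (fun t : ℝ => Real.exp (-1 * t ^ 2)) (Ioi 0) :=
    (integrable_exp_neg_mul_sq one_pos).integrableOn
  refine (((hpow.add hexp).const_mul (2 ^ (n - 1))).mono' (by fun_prop) ?_)
  filter_upwards [ae_restrict_mem measurableSet_Ioi] with t ht
  rw [Real.norm_of_nonneg (by have := ht.out.le; positivity)]
  calc (t + 1) ^ n * Real.exp (-t ^ 2)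
      ≤ 2 ^ (n - 1) * (t ^ n + 1 ^ n) * Real.exp (-t ^ 2) := by
        gcongr; exact add_pow_le (le_of_lt ht) zero_le_one n
    _ = _ := by simp only [one_pow, neg_mul, one_mul, Pi.add_apply]; ring

noncomputable def airyLineIntegral (k : ℕ) (x : ℝ) : ℂ :=
  ∫ t in Ioi (0 : ℝ), (t + I) ^ k * airyExp x (t + I)

lemma norm_pow_mul_airyExp_le (k : ℕ) {x : ℝ} {t : ℝ} (ht : 0 ≤ t) :
    ‖((t : ℂ) + I) ^ k * airyExp x (t + I)‖ ≤
      Real.exp (1 / 3 - x) * ((t + 1) ^ k * Real.exp (-t ^ 2)) := by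
  rw [norm_mul, norm_pow, norm_airyExp_ofReal_add_I]
  have hnorm : ‖(t : ℂ) + I‖ ≤ t + 1 := by
    simpa [abs_of_nonneg ht] using norm_add_le (t : ℂ) I
  calc ‖(t : ℂ) + I‖ ^ k * Real.exp (1 / 3 - x - t ^ 2)
      ≤ (t + 1) ^ k * Real.exp (1 / 3 - x - t ^ 2) := by gcongr
    _ = _ := by rw [sub_eq_add_neg (1 / 3 - x), Real.exp_add]; ring

lemma integrableOn_pow_mul_airyExp (k : ℕ) (x : ℝ) :
    IntegrableOn (fun t : ℝ => ((t : ℂ) + I) ^ k * airyExp x (t + I)) (Ioi 0) := by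
  refine ((integrableOn_add_one_pow_mul_exp_neg_sq k).const_mul (Real.exp (1 / 3 - x))).mono'
    (by unfold airyExp; fun_prop) ?_
  filter_upwards [ae_restrict_mem measurableSet_Ioi] with t ht
  exact norm_pow_mul_airyExp_le k ht.le

lemma hasDerivAt_airyLineIntegral (k : ℕ) (x₀ : ℝ) :
    HasDerivAt (airyLineIntegral k) (I * airyLineIntegral (k + 1) x₀) x₀ := by
  have h := hasDerivAt_integral_of_dominated_loc_of_deriv_le (μ := volume.restrict (Ioi 0))
    (F := fun x (t : ℝ) => ((t : ℂ) + I) ^ k * airyExp x (t + I))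
    (F' := fun x (t : ℝ) => I * (((t : ℂ) + I) ^ (k + 1) * airyExp x (t + I)))
    (bound := fun t => Real.exp (4 / 3 - x₀) * ((t + 1) ^ (k + 1) * Real.exp (-t ^ 2)))
    (Metric.ball_mem_nhds x₀ one_pos)
    (Eventually.of_forall fun x => (integrableOn_pow_mul_airyExp k x).aestronglyMeasurable)
    (integrableOn_pow_mul_airyExp k x₀)
    ((integrableOn_pow_mul_airyExp (k + 1) x₀).const_mul I).aestronglyMeasurable ?_
    ((integrableOn_add_one_pow_mul_exp_neg_sq (k + 1)).const_mul _) ?_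
  · rw [integral_const_mul] at h
    exact h.2
  · filter_upwards [ae_restrict_mem measurableSet_Ioi] with t ht x hx
    rw [Metric.mem_ball, Real.dist_eq, abs_lt] at hx
    rw [norm_mul, norm_I, one_mul]
    refine (norm_pow_mul_airyExp_le (k + 1) ht.le).trans ?_
    have := ht.out.le
    exact mul_le_mul_of_nonneg_right (Real.exp_le_exp.2 (by linarith)) (by positivity)
  · filter_upwards with t x _
    exact ((hasDerivAt_airyExp_param ((t : ℂ) + I) x).const_mul (((t : ℂ) + I) ^ k)).congr_deriv
      (by ring)

lemma tendsto_airyExp_ofReal_add_I (x : ℝ) :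
    Tendsto (fun t : ℝ => airyExp x (t + I)) atTop (𝓝 0) := by
  rw [tendsto_zero_iff_norm_tendsto_zero]
  simp_rw [norm_airyExp_ofReal_add_I]
  refine Real.tendsto_exp_atBot.comp (tendsto_atBot_add_const_left _ (1 / 3 - x) ?_)
  exact tendsto_neg_atTop_atBot.comp (tendsto_pow_atTop two_ne_zero)

lemma airyLineIntegral_two_add (x : ℝ) :
    airyLineIntegral 2 x + x * airyLineIntegral 0 x = I * Real.exp (1 / 3 - x) := by
  have hderiv (t : ℝ) : HasDerivAt (fun t : ℝ => airyExp x (t + I))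
      (I * (((t : ℂ) + I) ^ 2 + x) * airyExp x (t + I)) t :=
    ((hasDerivAt_airyExp x (t + I)).comp_add_const (t : ℂ) I).comp_ofReal
  have hint := ((integrableOn_pow_mul_airyExp 2 x).add
    ((integrableOn_pow_mul_airyExp 0 x).const_mul (x : ℂ))).const_mul I
  have hsum : I * (airyLineIntegral 2 x + x * airyLineIntegral 0 x) =
      ∫ t in Ioi (0 : ℝ), I * (((t : ℂ) + I) ^ 2 + x) * airyExp x (t + I) := by
    rw [airyLineIntegral, airyLineIntegral, ← integral_const_mul, ← integral_add
      (integrableOn_pow_mul_airyExp 2 x) ((integrableOn_pow_mul_airyExp 0 x).const_mul _),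
      ← integral_const_mul]
    congr 1 with t
    ring
  have hftc := integral_Ioi_of_hasDerivAt_of_tendsto (hderiv 0).continuousAt.continuousWithinAt
    (fun t _ => hderiv t)
    (hint.congr (Eventually.of_forall fun t => by
      simp only [Pi.add_apply, pow_zero, one_mul]; ring))
    (tendsto_airyExp_ofReal_add_I x)
  have hI : airyExp x I = Real.exp (1 / 3 - x) := by
    simpa using airyExp_ofReal_mul_I x 1
  rw [← hsum, ofReal_zero, zero_add, hI] at hftc
  linear_combination (-I) * hftc + (airyLineIntegral 2 x + x * airyLineIntegral 0 x) * I_mul_I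

lemma intervalIntegral_airyExp_eq (x R : ℝ) :
    ∫ t in (0 : ℝ)..R, airyExp x t =
      (∫ t in (0 : ℝ)..R, airyExp x (t + I)) + I * (∫ y in (0 : ℝ)..1, airyExp x (y * I)) -
        I * ∫ y in (0 : ℝ)..1, airyExp x (R + y * I) := by
  have h := integral_boundary_rect_eq_zero_of_differentiableOn (airyExp x) 0 (R + I)
    (differentiable_airyExp x).differentiableOn
  simp only [zero_re, zero_im, add_re, ofReal_re, I_re, add_im, ofReal_im, I_im, ofReal_zero,
    zero_mul, add_zero, zero_add, ofReal_one, one_mul, smul_eq_mul] at h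
  linear_combination h

lemma tendsto_intervalIntegral_airyExp_ofReal_add_mul_I (x : ℝ) :
    Tendsto (fun R : ℝ => ∫ y in (0 : ℝ)..1, airyExp x (R + y * I)) atTop (𝓝 0) := by
  have h := intervalIntegral.tendsto_integral_filter_of_dominated_convergence (μ := volume)
    (l := atTop) (a := 0) (b := 1) (F := fun (R y : ℝ) => airyExp x (R + y * I)) (f := fun _ => 0)
    (fun _ => Real.exp (1 / 3 + |x|))
    (Eventually.of_forall fun R => by unfold airyExp; fun_prop) ?_ intervalIntegrable_const ?_
  · simpa using h
  · refine Eventually.of_forall fun R => Eventually.of_forall fun y hy => ?_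
    rw [uIoc_of_le zero_le_one] at hy
    rw [norm_airyExp_ofReal_add_mul_I, Real.exp_le_exp]
    have hy3 : y ^ 3 ≤ 1 := pow_le_one₀ hy.1.le hy.2
    have hxy : -(x * y) ≤ |x| := by
      nlinarith [neg_abs_le x, abs_nonneg x, hy.1, hy.2]
    nlinarith [mul_nonneg (sq_nonneg R) hy.1.le]
  · refine Eventually.of_forall fun y hy => ?_
    rw [uIoc_of_le zero_le_one] at hy
    rw [tendsto_zero_iff_norm_tendsto_zero]
    simp_rw [norm_airyExp_ofReal_add_mul_I]
    refine Real.tendsto_exp_atBot.comp (tendsto_atBot_add_const_left _ (y ^ 3 / 3 - x * y) ?_)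
    exact tendsto_neg_atTop_atBot.comp ((tendsto_pow_atTop two_ne_zero).atTop_mul_const hy.1)

lemma tendsto_intervalIntegral_airyExp (x : ℝ) :
    Tendsto (fun R : ℝ => ∫ t in (0 : ℝ)..R, airyExp x t) atTop
      (𝓝 (airyLineIntegral 0 x + I * ∫ y in (0 : ℝ)..1, airyExp x (y * I))) := by
  have hline : Tendsto (fun R : ℝ => ∫ t in (0 : ℝ)..R, airyExp x (t + I)) atTop
      (𝓝 (airyLineIntegral 0 x)) := by
    simpa [airyLineIntegral] using
      intervalIntegral_tendsto_integral_Ioi 0 (integrableOn_pow_mul_airyExp 0 x) tendsto_id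
  simpa [intervalIntegral_airyExp_eq] using
    (hline.add_const _).sub ((tendsto_intervalIntegral_airyExp_ofReal_add_mul_I x).const_mul I)

lemma re_intervalIntegral_airyExp (x R : ℝ) :
    (∫ t in (0 : ℝ)..R, airyExp x t).re =
      ∫ t in (0 : ℝ)..R, Real.cos (t ^ 3 / 3 + x * t) := by
  rw [← reCLM_apply, ← reCLM.intervalIntegral_comp_comm
    (Continuous.intervalIntegrable (u := fun t : ℝ => airyExp x t)
      ((differentiable_airyExp x).continuous.comp continuous_ofReal) 0 R)]
  simp only [reCLM_apply, airyExp_ofReal, exp_ofReal_mul_I_re]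

lemma re_I_mul_intervalIntegral_airyExp_mul_I (x : ℝ) :
    (I * ∫ y in (0 : ℝ)..1, airyExp x (y * I)).re = 0 := by
  simp only [airyExp_ofReal_mul_I, intervalIntegral.integral_ofReal, mul_re, I_re, I_im,
    ofReal_re, ofReal_im]
  ring

noncomputable def airyDeriv (k : ℕ) (x : ℝ) : ℝ := π⁻¹ * (I ^ k * airyLineIntegral k x).re

lemma Ai_eq_airyDeriv_zero : Ai = airyDeriv 0 := by
  funext x
  have h := (continuous_re.tendsto _).comp (tendsto_intervalIntegral_airyExp x)
  rw [add_re, re_I_mul_intervalIntegral_airyExp_mul_I, add_zero] at h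
  rw [Ai, (h.congr fun R => re_intervalIntegral_airyExp x R).limUnder_eq, airyDeriv, pow_zero,
    one_mul]

lemma hasDerivAt_airyDeriv (k : ℕ) (x : ℝ) :
    HasDerivAt (airyDeriv k) (airyDeriv (k + 1) x) x := by
  refine ((reCLM.hasFDerivAt.comp_hasDerivAt x
    ((hasDerivAt_airyLineIntegral k x).const_mul (I ^ k))).const_mul π⁻¹).congr_deriv ?_
  rw [airyDeriv, pow_succ, mul_assoc, reCLM_apply]

lemma airyDeriv_two (x : ℝ) : airyDeriv 2 x = x * airyDeriv 0 x := by
  rw [airyDeriv, airyDeriv, I_sq, pow_zero, one_mul, eq_sub_of_add_eq (airyLineIntegral_two_add x)]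
  simp only [neg_mul, one_mul, neg_sub, sub_re, mul_re, ofReal_re, ofReal_im, I_re, I_im]
  ring

/-- The Airy function is twice differentiable and satisfies the Airy equation
`Ai''(x) = x Ai(x)`. -/
theorem airy_ode :
    Differentiable ℝ Ai ∧ Differentiable ℝ (deriv Ai) ∧
    ∀ x : ℝ, deriv (deriv Ai) x = x * Ai x := by
  have hderiv (k : ℕ) : deriv (airyDeriv k) = airyDeriv (k + 1) :=
    funext fun x => (hasDerivAt_airyDeriv k x).deriv
  have hdiff (k : ℕ) : Differentiable ℝ (airyDeriv k) :=
    fun x => (hasDerivAt_airyDeriv k x).differentiableAt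
  rw [Ai_eq_airyDeriv_zero, hderiv, hderiv]
  exact ⟨hdiff 0, hdiff 1, airyDeriv_two⟩
end

section
/- For every real s_L, every natural number k, and every i ∈ {0, 1, 2}, there exists a constant C = C(s_L, k, i) such that |s|^k · |Ai^{(i)}(s)| ≤ C e^{−s} for all s ≥ s_L, where Ai^{(0)} = Ai, Ai^{(1)} = Ai', Ai^{(2)} = Ai''. -/
open Real Filter MeasureTheory

/-!
Shift the contour of the Airy integral to the line `Im z = h > 0`. The kernel
`exp (i (z³/3 + x z))` is entire; on the rectangle `[0, R] × [0, h]` its integral over the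
side `Re z = 0` is purely imaginary and the one over `Re z = R` vanishes as `R → ∞`, so
`π Ai x = Re ∫₀^∞ exp (i ((t + ih)³/3 + x (t + ih))) dt`. On that line the integrand has
modulus `exp (h³/3 - h x - h t²)`, Gaussian in `t` locally uniformly in `x`, so the integral
may be differentiated in `x` under the integral sign any number of times, and
`|Ai⁽ʲ⁾ x| ≤ C e^{-h x}` for every `h > 0`. Taking `h = k + 1` absorbs the weight `|s|^k`,
because `|s| e^{-s}` is bounded on `[s_L, ∞)`.
-/

open Set Topology
open Complex (I)

noncomputable def airyKernel (x : ℝ) (z : ℂ) : ℂ := Complex.exp (I * (z ^ 3 / 3 + x * z))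

noncomputable def shiftedAiryIntegrand (h : ℝ) (j : ℕ) (x t : ℝ) : ℂ :=
  (I * (t + h * I)) ^ j * airyKernel x (t + h * I)

noncomputable def shiftedAiry (h : ℝ) (j : ℕ) (x : ℝ) : ℂ :=
  ∫ t in Ioi 0, shiftedAiryIntegrand h j x t

theorem differentiable_airyKernel (x : ℝ) : Differentiable ℂ (airyKernel x) := by
  unfold airyKernel
  fun_prop

theorem re_airyKernel_ofReal (x t : ℝ) : (airyKernel x t).re = Real.cos (t ^ 3 / 3 + x * t) := by
  rw [airyKernel, show I * ((t : ℂ) ^ 3 / 3 + x * t) = ((t ^ 3 / 3 + x * t : ℝ) : ℂ) * I by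
    push_cast; ring, Complex.exp_ofReal_mul_I_re]

theorem airyKernel_ofReal_mul_I (x y : ℝ) :
    airyKernel x (y * I) = (Real.exp (y ^ 3 / 3 - x * y) : ℂ) := by
  rw [airyKernel, Complex.ofReal_exp]
  congr 1
  push_cast
  ring_nf
  simp only [Complex.I_sq, Complex.I_pow_four]
  ring

theorem norm_airyKernel (x t h : ℝ) :
    ‖airyKernel x (t + h * I)‖ = Real.exp (h ^ 3 / 3 - x * h - h * t ^ 2) := by
  rw [airyKernel, Complex.norm_exp]
  congr 1
  simp only [pow_succ, pow_zero, one_mul, Complex.mul_re, Complex.mul_im, Complex.add_re,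
    Complex.add_im, Complex.I_re, Complex.I_im, Complex.ofReal_re, Complex.ofReal_im,
    Complex.div_ofNat_re, Complex.div_ofNat_im]
  ring

theorem continuous_shiftedAiryIntegrand (h : ℝ) (j : ℕ) (x : ℝ) :
    Continuous (shiftedAiryIntegrand h j x) := by
  unfold shiftedAiryIntegrand airyKernel
  fun_prop

theorem norm_shiftedAiryIntegrand_le (h : ℝ) (j : ℕ) (x t : ℝ) :
    ‖shiftedAiryIntegrand h j x t‖ ≤
      Real.exp (h ^ 3 / 3 - x * h) * ((1 + h ^ 2 + t ^ 2) ^ j * Real.exp (-h * t ^ 2)) := by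
  have hz : ‖I * (t + h * I)‖ ≤ 1 + h ^ 2 + t ^ 2 := by
    have hsq : ‖I * (t + h * I)‖ ^ 2 = t ^ 2 + h ^ 2 := by
      rw [norm_mul, Complex.norm_I, one_mul, Complex.sq_norm, Complex.normSq_add_mul_I]
    nlinarith [sq_nonneg (‖I * (t + h * I)‖ - 1)]
  rw [shiftedAiryIntegrand, norm_mul, norm_pow, norm_airyKernel,
    show h ^ 3 / 3 - x * h - h * t ^ 2 = (h ^ 3 / 3 - x * h) + -h * t ^ 2 by ring, Real.exp_add]
  calc _ ≤ (1 + h ^ 2 + t ^ 2) ^ j * (Real.exp (h ^ 3 / 3 - x * h) * Real.exp (-h * t ^ 2)) := by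
        gcongr
    _ = _ := by ring

theorem integrableOn_add_sq_pow_mul_exp_neg_mul_sq {b : ℝ} (hb : 0 < b) (c : ℝ) (j : ℕ) :
    IntegrableOn (fun t : ℝ ↦ (c + t ^ 2) ^ j * Real.exp (-b * t ^ 2)) (Ioi 0) := by
  have hterm (m : ℕ) :
      IntegrableOn (fun t : ℝ ↦ t ^ (2 * m) * Real.exp (-b * t ^ 2)) (Ioi 0) := by
    have hs : (-1 : ℝ) < (2 * m : ℕ) := by linarith [(2 * m).cast_nonneg (α := ℝ)]
    simpa only [Real.rpow_natCast] using integrableOn_rpow_mul_exp_neg_mul_sq hb hs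
  simp_rw [add_comm c, add_pow, Finset.sum_mul]
  exact integrable_finsetSum _ fun m _ ↦
    ((hterm m).const_mul (c ^ (j - m) * (j.choose m))).congr (.of_forall fun t ↦ by ring)

theorem integrableOn_shiftedAiryIntegrand {h : ℝ} (hh : 0 < h) (j : ℕ) (x : ℝ) :
    IntegrableOn (shiftedAiryIntegrand h j x) (Ioi 0) :=
  ((integrableOn_add_sq_pow_mul_exp_neg_mul_sq hh (1 + h ^ 2) j).const_mul _).mono'
    (continuous_shiftedAiryIntegrand h j x).aestronglyMeasurable
    (.of_forall (norm_shiftedAiryIntegrand_le h j x))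

theorem re_integral_airyKernel_eq (x h R : ℝ) :
    (∫ t in (0 : ℝ)..R, airyKernel x t).re =
      (∫ t in (0 : ℝ)..R, airyKernel x (t + h * I)).re -
        (I * ∫ y in (0 : ℝ)..h, airyKernel x (R + y * I)).re := by
  have hrect := Complex.integral_boundary_rect_eq_zero_of_differentiableOn (airyKernel x) 0
    (R + h * I) (differentiable_airyKernel x).differentiableOn
  simp only [Complex.zero_re, Complex.zero_im, Complex.add_re, Complex.add_im,
    Complex.ofReal_re, Complex.ofReal_im, Complex.mul_re, Complex.mul_im, Complex.I_re,
    Complex.I_im, mul_zero, mul_one, zero_mul, sub_zero, add_zero, zero_add,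
    Complex.ofReal_zero, smul_eq_mul] at hrect
  have hleft : (I * ∫ y in (0 : ℝ)..h, airyKernel x (y * I)).re = 0 := by
    rw [intervalIntegral.integral_congr fun y _ ↦ airyKernel_ofReal_mul_I x y,
      intervalIntegral.integral_ofReal]
    simp
  have hrect_re := congrArg Complex.re hrect
  simp only [Complex.add_re, Complex.sub_re, Complex.zero_re] at hrect_re
  linarith

theorem tendsto_integral_airyKernel_vertical (x h : ℝ) (hh : 0 ≤ h) :
    Tendsto (fun R : ℝ ↦ ∫ y in (0 : ℝ)..h, airyKernel x (R + y * I)) atTop (𝓝 0) := by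
  have hdom := intervalIntegral.tendsto_integral_filter_of_dominated_convergence
    (f := fun _ ↦ (0 : ℂ)) (a := 0) (b := h) (l := atTop) (μ := volume)
    (F := fun (R : ℝ) (y : ℝ) ↦ airyKernel x (R + y * I))
    (fun y ↦ Real.exp (y ^ 3 / 3 - x * y)) ?_ ?_ ?_ ?_
  · simpa using hdom
  · refine .of_forall fun R ↦ Continuous.aestronglyMeasurable ?_
    unfold airyKernel
    fun_prop
  · refine .of_forall fun R ↦ .of_forall fun y hy ↦ ?_
    rw [uIoc_of_le hh] at hy
    rw [norm_airyKernel]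
    exact Real.exp_le_exp.2 (by nlinarith [hy.1, sq_nonneg R])
  · exact Continuous.intervalIntegrable (by fun_prop) _ _
  · refine .of_forall fun y hy ↦ ?_
    rw [uIoc_of_le hh] at hy
    rw [tendsto_zero_iff_norm_tendsto_zero]
    simp_rw [norm_airyKernel]
    refine Real.tendsto_exp_atBot.comp ?_
    have hquad : Tendsto (fun R : ℝ ↦ -(y * R ^ 2)) atTop atBot :=
      tendsto_neg_atTop_atBot.comp ((tendsto_pow_atTop two_ne_zero).const_mul_atTop hy.1)
    exact (tendsto_atBot_add_const_left _ (y ^ 3 / 3 - x * y) hquad).congr fun R ↦ by ring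

theorem Ai_eq_re_shiftedAiry {h : ℝ} (hh : 0 < h) (x : ℝ) :
    Ai x = Real.pi⁻¹ * (shiftedAiry h 0 x).re := by
  have hhoriz : Tendsto (fun R : ℝ ↦ ∫ t in (0 : ℝ)..R, airyKernel x (t + h * I)) atTop
      (𝓝 (shiftedAiry h 0 x)) := by
    simpa [shiftedAiry, shiftedAiryIntegrand] using
      intervalIntegral_tendsto_integral_Ioi 0 (integrableOn_shiftedAiryIntegrand hh 0 x) tendsto_id
  have hcos : Tendsto (fun R : ℝ ↦ ∫ t in (0 : ℝ)..R, Real.cos (t ^ 3 / 3 + x * t)) atTop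
      (𝓝 (shiftedAiry h 0 x).re) := by
    have hlim := (Complex.continuous_re.tendsto _ |>.comp hhoriz).sub
      (Complex.continuous_re.tendsto _ |>.comp
        ((tendsto_integral_airyKernel_vertical x h hh.le).const_mul I))
    simp only [mul_zero, Complex.zero_re, sub_zero] at hlim
    refine hlim.congr fun R ↦ ?_
    simp only [Function.comp_apply, ← re_integral_airyKernel_eq x h R, ← re_airyKernel_ofReal]
    exact (Complex.reCLM.intervalIntegral_comp_comm
      (((differentiable_airyKernel x).continuous.comp Complex.continuous_ofReal).intervalIntegrable
        (μ := volume) 0 R)).symm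
  rw [Ai, hcos.limUnder_eq]

theorem hasDerivAt_shiftedAiryIntegrand (h : ℝ) (j : ℕ) (x t : ℝ) :
    HasDerivAt (fun x ↦ shiftedAiryIntegrand h j x t) (shiftedAiryIntegrand h (j + 1) x t) x := by
  set z : ℂ := t + h * I
  have hphase : HasDerivAt (fun x : ℝ ↦ I * (z ^ 3 / 3 + x * z)) (I * z) x := by
    simpa using (((hasDerivAt_id x).ofReal_comp.mul_const z).const_add (z ^ 3 / 3)).const_mul I
  refine (hphase.cexp.const_mul ((I * z) ^ j)).congr_deriv ?_
  simp only [shiftedAiryIntegrand, airyKernel, pow_succ]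
  ring

theorem hasDerivAt_shiftedAiry {h : ℝ} (hh : 0 < h) (j : ℕ) (x₀ : ℝ) :
    HasDerivAt (shiftedAiry h j) (shiftedAiry h (j + 1) x₀) x₀ := by
  -- on `ball x₀ 1` we have `-x h ≤ -(x₀ - 1) h`, so the bound at `x₀ - 1` dominates
  refine (hasDerivAt_integral_of_dominated_loc_of_deriv_le (Metric.ball_mem_nhds x₀ one_pos)
    (.of_forall fun x ↦ (continuous_shiftedAiryIntegrand h j x).aestronglyMeasurable)
    (integrableOn_shiftedAiryIntegrand hh j x₀)
    (continuous_shiftedAiryIntegrand h (j + 1) x₀).aestronglyMeasurable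
    (.of_forall fun t x hx ↦ (norm_shiftedAiryIntegrand_le h (j + 1) x t).trans ?_)
    ((integrableOn_add_sq_pow_mul_exp_neg_mul_sq hh (1 + h ^ 2) (j + 1)).const_mul
      (Real.exp (h ^ 3 / 3 - (x₀ - 1) * h)))
    (.of_forall fun t x _ ↦ hasDerivAt_shiftedAiryIntegrand h j x t)).2
  have hx' : x₀ - 1 < x := by
    linarith [(abs_lt.1 (Real.dist_eq x x₀ ▸ Metric.mem_ball.1 hx)).1]
  gcongr

theorem iterate_deriv_Ai {h : ℝ} (hh : 0 < h) (j : ℕ) :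
    deriv^[j] Ai = fun x ↦ Real.pi⁻¹ * (shiftedAiry h j x).re := by
  induction j with
  | zero => exact funext (Ai_eq_re_shiftedAiry hh)
  | succ j ih =>
    rw [Function.iterate_succ_apply', ih]
    exact funext fun x ↦ ((Complex.reCLM.hasFDerivAt.comp_hasDerivAt x
      (hasDerivAt_shiftedAiry hh j x)).const_mul _).deriv

theorem abs_re_shiftedAiry_le {h : ℝ} (hh : 0 < h) (j : ℕ) (x : ℝ) :
    |(shiftedAiry h j x).re| ≤
      Real.exp (h ^ 3 / 3 - x * h) *
        ∫ t in Ioi 0, (1 + h ^ 2 + t ^ 2) ^ j * Real.exp (-h * t ^ 2) := by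
  rw [← integral_const_mul]
  exact (Complex.abs_re_le_norm _).trans <| norm_integral_le_of_norm_le
    ((integrableOn_add_sq_pow_mul_exp_neg_mul_sq hh (1 + h ^ 2) j).const_mul _)
    (.of_forall (norm_shiftedAiryIntegrand_le h j x))

theorem exists_abs_iterate_deriv_Ai_le {h : ℝ} (hh : 0 < h) (j : ℕ) :
    ∃ C, 0 ≤ C ∧ ∀ x, |deriv^[j] Ai x| ≤ C * Real.exp (-(h * x)) := by
  set M := ∫ t in Ioi 0, (1 + h ^ 2 + t ^ 2) ^ j * Real.exp (-h * t ^ 2)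
  have hM : 0 ≤ M := integral_nonneg fun t ↦ by positivity
  refine ⟨Real.pi⁻¹ * Real.exp (h ^ 3 / 3) * M, by positivity, fun x ↦ ?_⟩
  rw [iterate_deriv_Ai hh, abs_mul, abs_of_pos (inv_pos.2 Real.pi_pos)]
  calc Real.pi⁻¹ * |(shiftedAiry h j x).re|
      ≤ Real.pi⁻¹ * (Real.exp (h ^ 3 / 3 - x * h) * M) := by
        gcongr
        exact abs_re_shiftedAiry_le hh j x
    _ = _ := by
        rw [sub_eq_add_neg, Real.exp_add, mul_comm x h]
        ring

theorem abs_mul_exp_neg_le {a s : ℝ} (has : a ≤ s) :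
    |s| * Real.exp (-s) ≤ 1 + 2 * |a| * Real.exp (-a) := by
  have habs : |s| ≤ s + 2 * |a| := by
    cases abs_cases s <;> cases abs_cases a <;> linarith
  have hs : s * Real.exp (-s) ≤ 1 := by
    calc s * Real.exp (-s) ≤ Real.exp s * Real.exp (-s) := by
          gcongr
          linarith [Real.add_one_le_exp s]
      _ = 1 := by rw [← Real.exp_add, add_neg_cancel, Real.exp_zero]
  have hexp : Real.exp (-s) ≤ Real.exp (-a) := Real.exp_le_exp.2 (neg_le_neg has)
  calc |s| * Real.exp (-s) ≤ (s + 2 * |a|) * Real.exp (-s) := by gcongr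
    _ = s * Real.exp (-s) + 2 * |a| * Real.exp (-s) := by ring
    _ ≤ 1 + 2 * |a| * Real.exp (-a) := by gcongr

/-- Exponential decay of the Airy function and its first two derivatives, with any
polynomial weight: for `i ∈ {0,1,2}`, `|s|^k |Ai^{(i)}(s)| ≤ C e^{-s}` for `s ≥ s_L`. -/
theorem airy_decay (sL : ℝ) (k : ℕ) :
    ∀ i ∈ ({0, 1, 2} : Set ℕ), ∃ C : ℝ, ∀ s : ℝ, sL ≤ s →
      |s| ^ k * |deriv^[i] Ai s| ≤ C * Real.exp (-s) := by
  intro i _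
  obtain ⟨C, hC, hAi⟩ := exists_abs_iterate_deriv_Ai_le (h := k + 1) (by positivity) i
  refine ⟨C * (1 + 2 * |sL| * Real.exp (-sL)) ^ k, fun s hs ↦ ?_⟩
  calc |s| ^ k * |deriv^[i] Ai s|
      ≤ |s| ^ k * (C * Real.exp (-((k + 1) * s))) := by gcongr; exact hAi s
    _ = C * (|s| * Real.exp (-s)) ^ k * Real.exp (-s) := by
        rw [show -((k + 1) * s) = k * -s + -s by ring, Real.exp_add, Real.exp_nat_mul]
        ring
    _ ≤ C * (1 + 2 * |sL| * Real.exp (-sL)) ^ k * Real.exp (-s) := by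
        gcongr
        exact abs_mul_exp_neg_le hs
end

section
/- Let s₀ ∈ ℝ, let a₁, b₁ > 0, let 0 ≤ γ < 2 min(a₁, b₁), and let ρ₁, ρ₂ : ℝ → ℝ each be one of the two functions s ↦ e^{γ|s|} or s ↦ e^{−γ|s|}. Suppose a, b : ℝ → ℝ are measurable with |a(s)| ≤ a_N e^{−a₁ s} and |b(s)| ≤ b_N e^{−b₁ s} for all s ≥ s₀, where a_N, b_N ≥ 0. Then there is a constant C depending only on a₁, b₁, γ such that the weighted L² norm of the kernel (a ◇ b)(s, t) = ∫₀^∞ a(s+z) b(t+z) dz satisfies (∫_{s₀}^∞ ∫_{s₀}^∞ (a ◇ b)(s,t)² ρ₁(s) ρ₂(t)^{−1} ds dt)^{1/2} ≤ C · (a_N b_N / (a₁ + b₁)) · e^{−(a₁+b₁) s₀ + γ|s₀|}. -/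
open Real Filter MeasureTheory

/-- The kernel `(a ◇ b)(s,t) = ∫₀^∞ a(s+z) b(t+z) dz`. -/
noncomputable def diamond (a b : ℝ → ℝ) (s t : ℝ) : ℝ :=
  ∫ z in Set.Ioi (0 : ℝ), a (s + z) * b (t + z)

/-!
Bounding `|a (s + z) b (t + z)|` by `a_N b_N e^{-a₁ s - b₁ t} e^{-(a₁ + b₁) z}` and integrating
in `z` gives `|(a ◇ b)(s, t)| ≤ a_N b_N / (a₁ + b₁) · e^{-a₁ s - b₁ t}` on `[s₀, ∞)²`. Both
weights `ρᵢ(u)^{±1}` are at most `e^{γ |u|} ≤ e^{γ (|s₀| - s₀)} e^{γ u}` there, so the weighted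
square of the kernel is dominated by `e^{-(2a₁ - γ) s} e^{-(2b₁ - γ) t}`, which is integrable
because `γ < 2 min(a₁, b₁)`. Integrating yields the bound with
`C = ((2a₁ - γ)(2b₁ - γ))^{-1/2}`.
-/

open Set

lemma integrableOn_exp_neg_mul_Ioi {α : ℝ} (hα : 0 < α) (c : ℝ) :
    IntegrableOn (fun x => exp (-(α * x))) (Ioi c) := by
  simpa only [neg_mul] using integrableOn_exp_mul_Ioi (neg_neg_of_pos hα) c

lemma integral_exp_neg_mul_Ioi {α : ℝ} (hα : 0 < α) (c : ℝ) :
    ∫ x in Ioi c, exp (-(α * x)) = exp (-(α * c)) / α := by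
  simp only [← neg_mul]
  rw [integral_exp_mul_Ioi (neg_neg_of_pos hα), neg_div_neg_eq]

lemma setIntegral_le_of_nonneg_of_le {X : Type*} [MeasurableSpace X] {μ : Measure X}
    {s : Set X} {f g : X → ℝ} (hs : MeasurableSet s) (hg : IntegrableOn g s μ)
    (hf0 : ∀ x ∈ s, 0 ≤ f x) (hfg : ∀ x ∈ s, f x ≤ g x) :
    ∫ x in s, f x ∂μ ≤ ∫ x in s, g x ∂μ :=
  integral_mono_of_nonneg ((ae_restrict_iff' hs).2 (.of_forall hf0)) hg
    ((ae_restrict_iff' hs).2 (.of_forall hfg))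

lemma integral_Ioi_integral_Ioi_le_of_le_exp {F : ℝ → ℝ → ℝ} {α β K c : ℝ}
    (hα : 0 < α) (hβ : 0 < β) (hF0 : ∀ s t, c < s → c < t → 0 ≤ F s t)
    (hF : ∀ s t, c < s → c < t → F s t ≤ K * exp (-(α * s)) * exp (-(β * t))) :
    ∫ s in Ioi c, ∫ t in Ioi c, F s t ≤
      K * (exp (-(α * c)) / α) * (exp (-(β * c)) / β) := by
  have hinner : ∀ s, c < s →
      ∫ t in Ioi c, F s t ≤ K * (exp (-(β * c)) / β) * exp (-(α * s)) := fun s hs =>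
    calc ∫ t in Ioi c, F s t
        ≤ ∫ t in Ioi c, K * exp (-(α * s)) * exp (-(β * t)) :=
          setIntegral_le_of_nonneg_of_le measurableSet_Ioi
            ((integrableOn_exp_neg_mul_Ioi hβ c).const_mul _)
            (fun t ht => hF0 s t hs ht) (fun t ht => hF s t hs ht)
      _ = K * (exp (-(β * c)) / β) * exp (-(α * s)) := by
          rw [integral_const_mul, integral_exp_neg_mul_Ioi hβ]; ring
  calc ∫ s in Ioi c, ∫ t in Ioi c, F s t
      ≤ ∫ s in Ioi c, K * (exp (-(β * c)) / β) * exp (-(α * s)) :=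
        setIntegral_le_of_nonneg_of_le measurableSet_Ioi
          ((integrableOn_exp_neg_mul_Ioi hα c).const_mul _)
          (fun s hs => setIntegral_nonneg measurableSet_Ioi fun t ht => hF0 s t hs ht) hinner
    _ = K * (exp (-(α * c)) / α) * (exp (-(β * c)) / β) := by
        rw [integral_const_mul, integral_exp_neg_mul_Ioi hα]; ring

lemma abs_diamond_le {a b : ℝ → ℝ} {a₁ b₁ aN bN s₀ s t : ℝ} (hab : 0 < a₁ + b₁)
    (haN : 0 ≤ aN)
    (ha : ∀ s, s₀ ≤ s → |a s| ≤ aN * exp (-(a₁ * s)))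
    (hb : ∀ s, s₀ ≤ s → |b s| ≤ bN * exp (-(b₁ * s))) (hs : s₀ ≤ s) (ht : s₀ ≤ t) :
    |diamond a b s t| ≤ aN * bN / (a₁ + b₁) * exp (-(a₁ * s) - b₁ * t) := by
  set E := aN * bN * exp (-(a₁ * s) - b₁ * t)
  have hle : ∀ z ∈ Ioi (0 : ℝ), ‖a (s + z) * b (t + z)‖ ≤ E * exp (-((a₁ + b₁) * z)) := by
    intro z (hz : 0 < z)
    calc ‖a (s + z) * b (t + z)‖ = |a (s + z)| * |b (t + z)| := by
          rw [Real.norm_eq_abs, abs_mul]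
      _ ≤ aN * exp (-(a₁ * (s + z))) * (bN * exp (-(b₁ * (t + z)))) :=
          mul_le_mul (ha _ (by linarith)) (hb _ (by linarith)) (abs_nonneg _) (by positivity)
      _ = aN * bN * exp (-(a₁ * (s + z)) + -(b₁ * (t + z))) := by rw [exp_add]; ring
      _ = E * exp (-((a₁ + b₁) * z)) := by simp only [E, mul_assoc, ← exp_add]; ring_nf
  calc |diamond a b s t|
      ≤ ∫ z in Ioi (0 : ℝ), E * exp (-((a₁ + b₁) * z)) :=
        norm_integral_le_of_norm_le ((integrableOn_exp_neg_mul_Ioi hab 0).const_mul E)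
          ((ae_restrict_iff' measurableSet_Ioi).2 (.of_forall hle))
    _ = aN * bN / (a₁ + b₁) * exp (-(a₁ * s) - b₁ * t) := by
        rw [integral_const_mul, integral_exp_neg_mul_Ioi hab]; simp [E]; ring

lemma pos_of_mem_weights {γ : ℝ} {ρ : ℝ → ℝ}
    (hρ : ρ ∈ ({fun s => exp (γ * |s|), fun s => exp (-(γ * |s|))} : Set (ℝ → ℝ))) (u : ℝ) :
    0 < ρ u := by
  rcases hρ with rfl | rfl <;> exact exp_pos _

lemma mem_Icc_of_mem_weights {γ : ℝ} (hγ : 0 ≤ γ) {ρ : ℝ → ℝ}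
    (hρ : ρ ∈ ({fun s => exp (γ * |s|), fun s => exp (-(γ * |s|))} : Set (ℝ → ℝ))) (u : ℝ) :
    ρ u ∈ Icc (exp (-(γ * |u|))) (exp (γ * |u|)) := by
  have : -(γ * |u|) ≤ γ * |u| := by have := mul_nonneg hγ (abs_nonneg u); linarith
  rcases hρ with rfl | rfl
  · exact ⟨exp_le_exp.2 this, le_rfl⟩
  · exact ⟨le_rfl, exp_le_exp.2 this⟩

lemma exp_mul_abs_le {γ s₀ u : ℝ} (hγ : 0 ≤ γ) (hu : s₀ ≤ u) :
    exp (γ * |u|) ≤ exp (γ * (|s₀| - s₀)) * exp (γ * u) := by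
  rw [← exp_add, exp_le_exp, ← mul_add]
  refine mul_le_mul_of_nonneg_left ?_ hγ
  have := abs_sub_abs_le_abs_sub u s₀
  rw [abs_of_nonneg (sub_nonneg.2 hu)] at this
  linarith

lemma sq_mul_weights_le {k M a₁ b₁ γ s₀ s t : ℝ} {ρ₁ ρ₂ : ℝ → ℝ} (hγ : 0 ≤ γ)
    (hρ₁ : ρ₁ ∈ ({fun s => exp (γ * |s|), fun s => exp (-(γ * |s|))} : Set (ℝ → ℝ)))
    (hρ₂ : ρ₂ ∈ ({fun s => exp (γ * |s|), fun s => exp (-(γ * |s|))} : Set (ℝ → ℝ)))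
    (hs : s₀ ≤ s) (ht : s₀ ≤ t) (hk : |k| ≤ M * exp (-(a₁ * s) - b₁ * t)) :
    k ^ 2 * ρ₁ s * (ρ₂ t)⁻¹ ≤ (M * exp (γ * (|s₀| - s₀))) ^ 2 *
      exp (-((2 * a₁ - γ) * s)) * exp (-((2 * b₁ - γ) * t)) := by
  obtain ⟨-, hρ₁s⟩ := mem_Icc_of_mem_weights hγ hρ₁ s
  have hρ₂t : (ρ₂ t)⁻¹ ≤ exp (γ * |t|) := by
    rw [← inv_inv (exp _), ← exp_neg]
    exact inv_anti₀ (exp_pos _) (mem_Icc_of_mem_weights hγ hρ₂ t).1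
  have hk2 : k ^ 2 ≤ (M * exp (-(a₁ * s) - b₁ * t)) ^ 2 :=
    sq_le_sq' (abs_le.1 hk).1 (abs_le.1 hk).2
  calc k ^ 2 * ρ₁ s * (ρ₂ t)⁻¹
      ≤ (M * exp (-(a₁ * s) - b₁ * t)) ^ 2 * exp (γ * |s|) * exp (γ * |t|) := by
        gcongr
        exacts [(inv_pos.2 (pos_of_mem_weights hρ₂ t)).le, (pos_of_mem_weights hρ₁ s).le]
    _ ≤ (M * exp (-(a₁ * s) - b₁ * t)) ^ 2 * (exp (γ * (|s₀| - s₀)) * exp (γ * s)) *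
          (exp (γ * (|s₀| - s₀)) * exp (γ * t)) := by
        gcongr <;> exact exp_mul_abs_le hγ ‹_›
    _ = _ := by
        simp only [mul_pow, ← exp_nat_mul, mul_assoc, ← exp_add]
        ring_nf

/-- Weighted Hilbert–Schmidt (L²) norm bound for the kernel `a ◇ b`:
if `|a(s)| ≤ a_N e^{-a₁ s}` and `|b(s)| ≤ b_N e^{-b₁ s}` for `s ≥ s₀` and
`0 ≤ γ < 2 min(a₁,b₁)`, with weights `ρ₁, ρ₂` each equal to `e^{γ|s|}` or `e^{-γ|s|}`, then
`‖a ◇ b‖ ≤ C (a_N b_N/(a₁+b₁)) e^{-(a₁+b₁)s₀ + γ|s₀|}` with `C` depending only on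
`a₁, b₁, γ`. -/
theorem diamond_weighted_hs_bound (a₁ b₁ γ : ℝ) (ha₁ : 0 < a₁) (hb₁ : 0 < b₁)
    (hγ0 : 0 ≤ γ) (hγ : γ < 2 * min a₁ b₁) :
    ∃ C : ℝ, ∀ s₀ : ℝ, ∀ ρ₁ ρ₂ : ℝ → ℝ,
      ρ₁ ∈ ({fun s => Real.exp (γ * |s|), fun s => Real.exp (-(γ * |s|))} : Set (ℝ → ℝ)) →
      ρ₂ ∈ ({fun s => Real.exp (γ * |s|), fun s => Real.exp (-(γ * |s|))} : Set (ℝ → ℝ)) →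
      ∀ a b : ℝ → ℝ, ∀ aN bN : ℝ, Measurable a → Measurable b → 0 ≤ aN → 0 ≤ bN →
      (∀ s : ℝ, s₀ ≤ s → |a s| ≤ aN * Real.exp (-(a₁ * s))) →
      (∀ s : ℝ, s₀ ≤ s → |b s| ≤ bN * Real.exp (-(b₁ * s))) →
      Real.sqrt (∫ s in Set.Ioi s₀, ∫ t in Set.Ioi s₀,
          diamond a b s t ^ 2 * ρ₁ s * (ρ₂ t)⁻¹) ≤
        C * (aN * bN / (a₁ + b₁)) * Real.exp (-(a₁ + b₁) * s₀ + γ * |s₀|) := by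
  have hα : 0 < 2 * a₁ - γ := by linarith [min_le_left a₁ b₁]
  have hβ : 0 < 2 * b₁ - γ := by linarith [min_le_right a₁ b₁]
  refine ⟨(√((2 * a₁ - γ) * (2 * b₁ - γ)))⁻¹,
    fun s₀ ρ₁ ρ₂ hρ₁ hρ₂ a b aN bN _ _ haN hbN ha hb => ?_⟩
  have hnn : ∀ s t, s₀ < s → s₀ < t → 0 ≤ diamond a b s t ^ 2 * ρ₁ s * (ρ₂ t)⁻¹ :=
    fun s t _ _ => by
      have := pos_of_mem_weights hρ₁ s
      have := pos_of_mem_weights hρ₂ t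
      positivity
  have hbound := integral_Ioi_integral_Ioi_le_of_le_exp hα hβ hnn fun s t hs ht =>
    sq_mul_weights_le hγ0 hρ₁ hρ₂ hs.le ht.le (abs_diamond_le (by linarith) haN ha hb hs.le ht.le)
  rw [Real.sqrt_le_left (by positivity)]
  refine hbound.trans_eq ?_
  rw [mul_pow, mul_pow, mul_pow, inv_pow, sq_sqrt (mul_pos hα hβ).le, ← exp_nat_mul,
    ← exp_nat_mul]
  field_simp
  simp only [mul_assoc, ← exp_add]
  ring_nf
end

section
/- For every N ≥ 1 and all real x, y: Σ_{k=0}^{N−1} φ_k(x) φ_k(y) = (√(2N)/2) ∫₀^∞ [φ_N(x+z) φ_{N−1}(y+z) + φ_{N−1}(x+z) φ_N(y+z)] dz, the integral on the right being convergent. -/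
open Real Filter MeasureTheory

/-!
The ladder relation `φ_k' = √(k/2) φ_{k-1} - √((k+1)/2) φ_{k+1}`, which follows from
`H_k' = 2k H_{k-1}` and `H_{k+1} = 2x H_k - 2k H_{k-1}`, makes the `z`-derivative of
`Σ_{k<N} φ_k(x+z) φ_k(y+z)` telescope to `-(√(2N)/2)` times the integrand. Each `φ_k` is a
polynomial times `e^{-z²/2}`, so the sum tends to `0` as `z → ∞` and the integrand, a sum of
products of `L²` functions, is integrable; the fundamental theorem of calculus on `(0, ∞)` then
gives the identity.
-/

open Polynomial Topology

-- Differentiating `(-1)^n H_n(x) e^{-x²}` once more gives this recursion for `H_{n+1}`.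
noncomputable def physHermitePoly : ℕ → ℝ[X]
  | 0 => 1
  | n + 1 => C 2 * X * physHermitePoly n - derivative (physHermitePoly n)

lemma physHermitePoly_succ (n : ℕ) :
    physHermitePoly (n + 1) = C 2 * X * physHermitePoly n - derivative (physHermitePoly n) :=
  rfl

lemma derivative_physHermitePoly_succ (n : ℕ) :
    derivative (physHermitePoly (n + 1)) = C (2 * (n + 1 : ℝ)) * physHermitePoly n := by
  induction n with
  | zero => simp [physHermitePoly]
  | succ n ih =>
    rw [physHermitePoly_succ (n + 1), derivative_sub, derivative_mul, derivative_mul, ih,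
      derivative_C_mul, derivative_C, derivative_X, physHermitePoly_succ n]
    push_cast
    simp only [C_mul, C_add, C_1, map_ofNat]
    ring

lemma derivative_physHermitePoly (n : ℕ) :
    derivative (physHermitePoly n) = C (2 * (n : ℝ)) * physHermitePoly (n - 1) := by
  cases n with
  | zero => simp [physHermitePoly]
  | succ n => simpa using derivative_physHermitePoly_succ n

lemma eval_physHermitePoly_succ (n : ℕ) (u : ℝ) :
    (physHermitePoly (n + 1)).eval u =
      2 * u * (physHermitePoly n).eval u - 2 * n * (physHermitePoly (n - 1)).eval u := by
  simp [physHermitePoly_succ, derivative_physHermitePoly]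

lemma iteratedDeriv_exp_neg_sq (n : ℕ) :
    iteratedDeriv n (fun t : ℝ => exp (-t ^ 2)) =
      fun u => (-1) ^ n * (physHermitePoly n).eval u * exp (-u ^ 2) := by
  induction n with
  | zero => simp [physHermitePoly]
  | succ n ih =>
    funext u
    rw [iteratedDeriv_succ, ih]
    have hgauss : HasDerivAt (fun t : ℝ => exp (-t ^ 2)) (-(2 * u) * exp (-u ^ 2)) u := by
      simpa [mul_comm] using ((hasDerivAt_pow 2 u).neg).exp
    refine ((((physHermitePoly n).hasDerivAt u).const_mul ((-1 : ℝ) ^ n)).mul hgauss).deriv.trans ?_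
    simp only [physHermitePoly_succ, eval_sub, eval_mul, eval_C, eval_X, pow_succ]
    ring

lemma physHermite_eq_eval (n : ℕ) (u : ℝ) : physHermite n u = (physHermitePoly n).eval u := by
  have hsign : ((-1 : ℝ) ^ n) ^ 2 = 1 := by rw [← pow_mul, mul_comm, pow_mul]; norm_num
  rw [physHermite, iteratedDeriv_exp_neg_sq]
  calc (-1) ^ n * exp (u ^ 2) * ((-1) ^ n * (physHermitePoly n).eval u * exp (-u ^ 2))
      = ((-1 : ℝ) ^ n) ^ 2 * (physHermitePoly n).eval u * exp (u ^ 2 + -u ^ 2) := by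
        rw [exp_add]; ring
    _ = (physHermitePoly n).eval u := by simp [hsign]

lemma tendsto_eval_mul_exp_neg_mul_sq_cocompact (p : ℝ[X]) {b : ℝ} (hb : 0 < b) :
    Tendsto (fun u => p.eval u * exp (-b * u ^ 2)) (cocompact ℝ) (𝓝 0) := by
  induction p using Polynomial.induction_on' with
  | add p q hp hq => simpa [add_mul] using hp.add hq
  | monomial n a =>
    have hpow : Tendsto (fun u => u ^ n * exp (-b * u ^ 2)) (cocompact ℝ) (𝓝 0) := by
      refine squeeze_zero_norm (fun u => le_of_eq ?_)
        (tendsto_rpow_abs_mul_exp_neg_mul_sq_cocompact hb n)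
      simp [abs_exp]
    simpa [mul_assoc] using hpow.const_mul a

lemma integrable_eval_mul_exp_neg_mul_sq (p : ℝ[X]) {b : ℝ} (hb : 0 < b) :
    Integrable fun u => p.eval u * exp (-b * u ^ 2) := by
  induction p using Polynomial.induction_on' with
  | add p q hp hq => simpa [add_mul] using hp.fun_add hq
  | monomial n a =>
    have hpow := integrable_rpow_mul_exp_neg_mul_sq hb (s := n) (by linarith [n.cast_nonneg' (α := ℝ)])
    simpa [mul_assoc] using hpow.const_mul a

noncomputable def oscNorm (n : ℕ) : ℝ := hNorm n ^ (-(1 : ℝ) / 2)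

lemma hNorm_pos (n : ℕ) : 0 < hNorm n := by
  unfold hNorm
  positivity

lemma hNorm_succ (n : ℕ) : hNorm (n + 1) = 2 * (n + 1) * hNorm n := by
  simp only [hNorm, Nat.factorial_succ]
  push_cast
  ring

lemma sqrt_mul_oscNorm_succ (n : ℕ) : √(2 * (n + 1)) * oscNorm (n + 1) = oscNorm n := by
  have h2 : (0 : ℝ) < 2 * (n + 1) := by positivity
  rw [oscNorm, oscNorm, hNorm_succ, sqrt_eq_rpow, mul_rpow h2.le (hNorm_pos n).le, ← mul_assoc,
    ← rpow_add h2]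
  norm_num

lemma natCast_mul_oscNorm (n : ℕ) : n * oscNorm n = √(2 * n) / 2 * oscNorm (n - 1) := by
  cases n with
  | zero => simp
  | succ n =>
    have hsq : √(2 * (n + 1 : ℝ)) ^ 2 = 2 * (n + 1) := sq_sqrt (by positivity)
    rw [Nat.add_sub_cancel, ← sqrt_mul_oscNorm_succ n]
    push_cast
    linear_combination (-oscNorm (n + 1) / 2) * hsq

lemma osc_eq (n : ℕ) (u : ℝ) :
    osc n u = oscNorm n * (exp (-u ^ 2 / 2) * (physHermitePoly n).eval u) := by
  rw [osc, physHermite_eq_eval, oscNorm]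
  ring

-- At `n = 0` the truncated index `n - 1` is harmless: its coefficient `√(2 * 0)` vanishes.
lemma hasDerivAt_osc (n : ℕ) (u : ℝ) :
    HasDerivAt (osc n) (√(2 * n) / 2 * osc (n - 1) u - √(2 * (n + 1)) / 2 * osc (n + 1) u) u := by
  have hgauss : HasDerivAt (fun t : ℝ => exp (-t ^ 2 / 2)) (-u * exp (-u ^ 2 / 2)) u := by
    exact ((hasDerivAt_pow 2 u).fun_neg.div_const 2).exp.congr_deriv (by push_cast; ring)
  have h := ((hgauss.mul ((physHermitePoly n).hasDerivAt u)).const_mul (oscNorm n))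
  rw [show osc n = _ from funext (osc_eq n)]
  refine h.congr_deriv ?_
  simp only [osc_eq, derivative_physHermitePoly, eval_mul, eval_C]
  linear_combination (exp (-u ^ 2 / 2) * (physHermitePoly (n - 1)).eval u) * natCast_mul_oscNorm n
    + (exp (-u ^ 2 / 2) * (physHermitePoly (n + 1)).eval u / 2) * sqrt_mul_oscNorm_succ n
    + (oscNorm n * exp (-u ^ 2 / 2) / 2) * eval_physHermitePoly_succ n u

lemma continuous_osc (n : ℕ) : Continuous (osc n) :=
  continuous_iff_continuousAt.2 fun u => (hasDerivAt_osc n u).continuousAt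

lemma tendsto_osc_cocompact (n : ℕ) : Tendsto (osc n) (cocompact ℝ) (𝓝 0) := by
  have h := (tendsto_eval_mul_exp_neg_mul_sq_cocompact (physHermitePoly n)
    (by norm_num : (0 : ℝ) < 1 / 2)).const_mul (oscNorm n)
  rw [mul_zero] at h
  refine h.congr fun u => ?_
  rw [osc_eq]
  ring_nf

lemma memLp_osc (n : ℕ) : MemLp (osc n) 2 := by
  refine (memLp_two_iff_integrable_sq (continuous_osc n).aestronglyMeasurable).2 ?_
  have h := (integrable_eval_mul_exp_neg_mul_sq (physHermitePoly n ^ 2) one_pos).const_mul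
    (oscNorm n ^ 2)
  refine h.congr (Eventually.of_forall fun u => ?_)
  have hexp : exp (-u ^ 2 / 2) ^ 2 = exp (-1 * u ^ 2) := by rw [← exp_nat_mul]; ring_nf
  dsimp only
  rw [eval_pow, osc_eq, mul_pow, mul_pow, hexp]
  ring

lemma integrable_osc_mul_osc (m n : ℕ) (x y : ℝ) :
    Integrable fun z => osc m (x + z) * osc n (y + z) :=
  ((memLp_osc m).comp_measurePreserving (measurePreserving_add_left volume x)).integrable_mul
    ((memLp_osc n).comp_measurePreserving (measurePreserving_add_left volume y))

lemma hasDerivAt_sum_osc_mul_osc (N : ℕ) (x y z : ℝ) :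
    HasDerivAt (fun z => ∑ k ∈ Finset.range N, osc k (x + z) * osc k (y + z))
      (-(√(2 * N) / 2 * (osc N (x + z) * osc (N - 1) (y + z)
        + osc (N - 1) (x + z) * osc N (y + z)))) z := by
  let f : ℕ → ℝ := fun k =>
    √(2 * k) / 2 * (osc k (x + z) * osc (k - 1) (y + z) + osc (k - 1) (x + z) * osc k (y + z))
  have hterm (k : ℕ) : HasDerivAt (fun z => osc k (x + z) * osc k (y + z)) (f k - f (k + 1)) z := by
    refine (((hasDerivAt_osc k (x + z)).comp_const_add x z).mul
      ((hasDerivAt_osc k (y + z)).comp_const_add y z)).congr_deriv ?_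
    simp only [f, Nat.add_sub_cancel]
    push_cast
    ring
  refine (HasDerivAt.fun_sum fun k _ => hterm k).congr_deriv ?_
  -- The derivatives telescope, and the boundary term `f 0` vanishes.
  rw [Finset.sum_range_sub']
  simp [f]

theorem gue_kernel_integral_representation_general (N : ℕ) (x y : ℝ) :
    IntegrableOn
      (fun z => osc N (x + z) * osc (N - 1) (y + z) + osc (N - 1) (x + z) * osc N (y + z))
      (Set.Ioi (0 : ℝ)) ∧
    ∑ k ∈ Finset.range N, osc k x * osc k y =
      Real.sqrt (2 * N) / 2 *
        ∫ z in Set.Ioi (0 : ℝ),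
          (osc N (x + z) * osc (N - 1) (y + z) + osc (N - 1) (x + z) * osc N (y + z)) := by
  have hint := ((integrable_osc_mul_osc N (N - 1) x y).fun_add
    (integrable_osc_mul_osc (N - 1) N x y)).integrableOn (s := Set.Ioi 0)
  refine ⟨hint, ?_⟩
  have hdecay : Tendsto (fun z => ∑ k ∈ Finset.range N, osc k (x + z) * osc k (y + z))
      atTop (𝓝 0) := by
    have hshift (k : ℕ) (w : ℝ) : Tendsto (fun z => osc k (w + z)) atTop (𝓝 0) :=
      ((tendsto_osc_cocompact k).mono_left atTop_le_cocompact).comp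
        (tendsto_atTop_add_const_left atTop w tendsto_id)
    simpa using tendsto_finsetSum _ fun k _ => (hshift k x).mul (hshift k y)
  have hftc := integral_Ioi_of_hasDerivAt_of_tendsto'
    (fun z _ => hasDerivAt_sum_osc_mul_osc N x y z) (hint.const_mul _).neg hdecay
  rw [integral_neg, integral_const_mul] at hftc
  simp only [add_zero, zero_sub] at hftc
  linarith

/-- Integral representation of the GUE kernel:
`Σ_{k<N} φ_k(x)φ_k(y) = (√(2N)/2) ∫₀^∞ [φ_N(x+z)φ_{N-1}(y+z) + φ_{N-1}(x+z)φ_N(y+z)] dz`. -/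
theorem gue_kernel_integral_representation (N : ℕ) (hN : 1 ≤ N) (x y : ℝ) :
    IntegrableOn
      (fun z => osc N (x + z) * osc (N - 1) (y + z) + osc (N - 1) (x + z) * osc N (y + z))
      (Set.Ioi (0 : ℝ)) ∧
    ∑ k ∈ Finset.range N, osc k x * osc k y =
      Real.sqrt (2 * N) / 2 *
        ∫ z in Set.Ioi (0 : ℝ),
          (osc N (x + z) * osc (N - 1) (y + z) + osc (N - 1) (x + z) * osc N (y + z)) :=
  gue_kernel_integral_representation_general N x y
end

section
/- Fix s_L < 0, let N ≥ 1, let κ ∈ {2N+1, 2N−1}, and set σ = τ_N/√κ with τ_N = 2^{−1/2} N^{−1/6}. Then: (i) there exists N₀ (depending only on s_L) such that for all N ≥ N₀ and all s with s_L ≤ s ≤ N^{1/6}, |κ^{2/3} ζ(1 + σ s) − s| ≤ |s|/4; and (ii) there exists a constant C (depending only on s_L) such that for all N ≥ 1 and all s with s_L ≤ s ≤ N^{2/3}, |κ^{2/3} ζ(1 + σ s)| ≤ C |s|. -/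
open Real Filter MeasureTheory

/-- The Liouville–Green variable `ζ(ξ)` for the Hermite differential equation. -/
noncomputable def zetaLG (ξ : ℝ) : ℝ :=
  if 1 ≤ ξ then
    ((3 / 2) * ((1 / 2) * ξ * Real.sqrt (ξ ^ 2 - 1) -
      (1 / 2) * Real.log (ξ + Real.sqrt (ξ ^ 2 - 1)))) ^ ((2 : ℝ) / 3)
  else
    -((3 / 4) * (Real.arccos ξ - ξ * Real.sqrt (1 - ξ ^ 2))) ^ ((2 : ℝ) / 3)

section ZlbAux

set_option maxHeartbeats 1000000

private lemma zlb_rpow23_le {a b : ℝ} (ha : 0 ≤ a) (hb : 0 ≤ b) (h : a^2 ≤ b^3) :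
    a ^ ((2:ℝ)/3) ≤ b := by
  have h1 : a ^ ((2:ℝ)/3) = (a^2) ^ ((1:ℝ)/3) := by
    rw [← Real.rpow_natCast a 2, ← Real.rpow_mul ha]; norm_num
  have h2 : b = (b^3) ^ ((1:ℝ)/3) := by
    rw [← Real.rpow_natCast b 3, ← Real.rpow_mul hb]; norm_num
  rw [h1, h2]
  exact Real.rpow_le_rpow (by positivity) h (by norm_num)

private lemma zlb_le_rpow23 {a b : ℝ} (ha : 0 ≤ a) (hb : 0 ≤ b) (h : b^3 ≤ a^2) :
    b ≤ a ^ ((2:ℝ)/3) := by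
  have h1 : a ^ ((2:ℝ)/3) = (a^2) ^ ((1:ℝ)/3) := by
    rw [← Real.rpow_natCast a 2, ← Real.rpow_mul ha]; norm_num
  have h2 : b = (b^3) ^ ((1:ℝ)/3) := by
    rw [← Real.rpow_natCast b 3, ← Real.rpow_mul hb]; norm_num
  rw [h1, h2]
  exact Real.rpow_le_rpow (by positivity) h (by norm_num)

private lemma zlb_sinh_bound {t : ℝ} (h0 : 0 ≤ t) (ht : t ≤ 1) :
    |Real.sinh t - (t + t^3/6)| ≤ t^4 * (5/96) := by
  have habs : |t| ≤ 1 := by rw [abs_of_nonneg h0]; exact ht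
  have habs' : |(-t)| ≤ 1 := by rwa [abs_neg]
  have h1 := Real.exp_bound habs (n := 4) (by norm_num)
  have h2 := Real.exp_bound habs' (n := 4) (by norm_num)
  rw [abs_of_nonneg h0] at h1
  rw [abs_neg, abs_of_nonneg h0] at h2
  norm_num [Finset.sum_range_succ, Nat.factorial] at h1 h2
  rw [Real.sinh_eq, abs_le]
  rw [abs_le] at h1 h2
  constructor <;> nlinarith [h1.1, h1.2, h2.1, h2.2]

private lemma zlb_cosh_bound {t : ℝ} (h0 : 0 ≤ t) (ht : t ≤ 1) :
    |Real.cosh t - (1 + t^2/2)| ≤ t^4 * (5/96) := by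
  have habs : |t| ≤ 1 := by rw [abs_of_nonneg h0]; exact ht
  have habs' : |(-t)| ≤ 1 := by rwa [abs_neg]
  have h1 := Real.exp_bound habs (n := 4) (by norm_num)
  have h2 := Real.exp_bound habs' (n := 4) (by norm_num)
  rw [abs_of_nonneg h0] at h1
  rw [abs_neg, abs_of_nonneg h0] at h2
  norm_num [Finset.sum_range_succ, Nat.factorial] at h1 h2
  rw [Real.cosh_eq, abs_le]
  rw [abs_le] at h1 h2
  constructor <;> nlinarith [h1.1, h1.2, h2.1, h2.2]

private lemma zlb_core {θ δ X : ℝ} (hθ0 : 0 ≤ θ) (hθ : θ ≤ 1/5) (hδ0 : 0 ≤ δ) (hδ : δ ≤ 1/100)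
    (h1 : |δ - θ^2/2| ≤ θ^4 * (5/96)) (h2 : |X - θ^3/2| ≤ θ^4 * (5/16)) :
    (7/8) * (δ * Real.sqrt (2*δ)) ≤ X ∧ X ≤ (9/8) * (δ * Real.sqrt (2*δ)) := by
  rw [abs_le] at h1 h2
  set c := Real.sqrt (2*δ) with hc
  have hc0 : 0 ≤ c := Real.sqrt_nonneg _
  have hc2 : c^2 = 2*δ := Real.sq_sqrt (by linarith)
  have hθsq : θ^2 ≤ 1/25 := by nlinarith
  have hθ4 : θ^4 ≤ (1/25) * θ^2 := by nlinarith [mul_le_mul_of_nonneg_left hθsq (sq_nonneg θ)]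
  have hθ2 : θ^2 ≤ 21/1000 := by nlinarith [h1.2]
  have hθ15 : θ ≤ 3/20 := by nlinarith [sq_nonneg (θ - 3/20)]
  have hθ43 : θ^4 ≤ (3/20)*θ^3 := by
    nlinarith [mul_le_mul_of_nonneg_right hθ15 (pow_nonneg hθ0 3)]
  have hclo : (997/1000) * θ ≤ c := by
    have hsq : ((997/1000) * θ)^2 ≤ c^2 := by nlinarith [h1.1]
    nlinarith [sq_nonneg (c - 997/1000 * θ)]
  have hchi : c ≤ (1003/1000) * θ := by
    have hsq : c^2 ≤ ((1003/1000) * θ)^2 := by nlinarith [h1.2]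
    nlinarith [sq_nonneg (c + 1003/1000 * θ)]
  have hc3lo : (991/1000) * θ^3 ≤ c^3 := by
    nlinarith [pow_le_pow_left₀ (by positivity) hclo 3, pow_nonneg hθ0 3]
  have hc3hi : c^3 ≤ (1010/1000) * θ^3 := by
    nlinarith [pow_le_pow_left₀ hc0 hchi 3, pow_nonneg hθ0 3]
  have hδc : δ * c = c^3 / 2 := by
    have h3 : c^3 = c^2 * c := by ring
    rw [h3, hc2]; ring
  constructor
  · rw [hδc]; linarith [h2.1]
  · rw [hδc]; linarith [h2.2]

private lemma zlb_conv {δ X : ℝ} (hδ : 0 ≤ δ) (hlo : (7/8)*(δ*Real.sqrt (2*δ)) ≤ X)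
    (hhi : X ≤ (9/8)*(δ*Real.sqrt (2*δ))) :
    (23/20)*δ ≤ X ^ ((2:ℝ)/3) ∧ X ^ ((2:ℝ)/3) ≤ (137/100)*δ := by
  have hs0 : 0 ≤ Real.sqrt (2*δ) := Real.sqrt_nonneg _
  have hs2 : Real.sqrt (2*δ)^2 = 2*δ := Real.sq_sqrt (by linarith)
  have hX0 : 0 ≤ X := le_trans (by positivity) hlo
  have he : (δ*Real.sqrt (2*δ))^2 = 2*δ^3 := by
    rw [mul_pow, hs2]; ring
  constructor
  · apply zlb_le_rpow23 hX0 (by positivity)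
    have h : ((7/8)*(δ*Real.sqrt (2*δ)))^2 ≤ X^2 := by
      nlinarith [mul_nonneg hδ hs0]
    nlinarith [he, pow_nonneg hδ 3]
  · apply zlb_rpow23_le hX0 (by positivity)
    have h : X^2 ≤ ((9/8)*(δ*Real.sqrt (2*δ)))^2 := by
      nlinarith [mul_nonneg hδ hs0]
    nlinarith [he, pow_nonneg hδ 3]

private lemma zlb_right_X {δ : ℝ} (hδ0 : 0 ≤ δ) (hδ : δ ≤ 1/100) :
    (7/8)*(δ*Real.sqrt (2*δ)) ≤
      (3/2) * ((1/2) * (1+δ) * Real.sqrt ((1+δ)^2 - 1) -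
        (1/2) * Real.log ((1+δ) + Real.sqrt ((1+δ)^2 - 1))) ∧
    (3/2) * ((1/2) * (1+δ) * Real.sqrt ((1+δ)^2 - 1) -
        (1/2) * Real.log ((1+δ) + Real.sqrt ((1+δ)^2 - 1))) ≤ (9/8)*(δ*Real.sqrt (2*δ)) := by
  have hsq : (1+δ)^2 - 1 = δ^2 + 2*δ := by ring
  set r := Real.sqrt ((1+δ)^2 - 1) with hrdef
  have hr0 : 0 ≤ r := Real.sqrt_nonneg _
  have hr2 : r^2 = δ^2 + 2*δ := by rw [hrdef, Real.sq_sqrt (by nlinarith)]; exact hsq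
  have hrle : r ≤ 15/100 := by nlinarith
  have hypos : (0:ℝ) < (1+δ) + r := by linarith
  have hy1 : (1:ℝ) ≤ (1+δ) + r := by linarith
  set θ := Real.log ((1+δ) + r) with hθdef
  have hθ0 : 0 ≤ θ := Real.log_nonneg hy1
  have hθle : θ ≤ 1/5 := by
    have := Real.log_le_sub_one_of_pos hypos
    linarith
  have hyinv : ((1+δ) + r)⁻¹ = (1+δ) - r := by
    have hne : (1+δ) + r ≠ 0 := ne_of_gt hypos
    field_simp
    nlinarith [hr2]
  have hexp : Real.exp θ = (1+δ) + r := Real.exp_log hypos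
  have hexpneg : Real.exp (-θ) = (1+δ) - r := by rw [Real.exp_neg, hexp, hyinv]
  have hcosh : Real.cosh θ = 1 + δ := by rw [Real.cosh_eq, hexp, hexpneg]; ring
  have hsinh : Real.sinh θ = r := by rw [Real.sinh_eq, hexp, hexpneg]; ring
  have h1 : |δ - θ^2/2| ≤ θ^4 * (5/96) := by
    have hcb := zlb_cosh_bound hθ0 (by linarith)
    rw [hcosh] at hcb
    have e : δ - θ^2/2 = 1 + δ - (1 + θ^2/2) := by ring
    rw [e]; exact hcb
  have hsb := zlb_sinh_bound (t := 2*θ) (by linarith) (by linarith)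
  have hX : (3:ℝ)/2 * ((1/2) * (1+δ) * r - (1/2) * θ) = (3/8)*(Real.sinh (2*θ) - 2*θ) := by
    rw [Real.sinh_two_mul, hsinh, hcosh]; ring
  have h2 : |(3:ℝ)/2 * ((1/2) * (1+δ) * r - (1/2) * θ) - θ^3/2| ≤ θ^4 * (5/16) := by
    rw [hX, abs_le]
    rw [abs_le] at hsb
    constructor <;> nlinarith [hsb.1, hsb.2]
  exact zlb_core hθ0 hθle hδ0 hδ h1 h2

private lemma zlb_left_X {δ : ℝ} (hδ0 : 0 ≤ δ) (hδ : δ ≤ 1/100) :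
    (7/8)*(δ*Real.sqrt (2*δ)) ≤
      (3/4) * (Real.arccos (1-δ) - (1-δ) * Real.sqrt (1 - (1-δ)^2)) ∧
    (3/4) * (Real.arccos (1-δ) - (1-δ) * Real.sqrt (1 - (1-δ)^2)) ≤ (9/8)*(δ*Real.sqrt (2*δ)) := by
  set θ := Real.arccos (1-δ) with hθdef
  have hθ0 : 0 ≤ θ := Real.arccos_nonneg _
  have hcos : Real.cos θ = 1-δ := Real.cos_arccos (by linarith) (by linarith)
  have hsin : Real.sin θ = Real.sqrt (1 - (1-δ)^2) := Real.sin_arccos _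
  have hθle : θ ≤ 1/5 := by
    by_contra hcon
    push_neg at hcon
    have hπ : θ ≤ Real.pi := Real.arccos_le_pi _
    have hlt := Real.cos_lt_cos_of_nonneg_of_le_pi (by norm_num) hπ hcon
    have hcb := Real.cos_bound (x := 1/5) (by rw [abs_of_nonneg] <;> norm_num)
    rw [show |(1:ℝ)/5| = 1/5 by rw [abs_of_nonneg] ; norm_num, abs_le] at hcb
    rw [hcos] at hlt
    norm_num at hcb
    linarith [hcb.1, hcb.2]
  have h1 : |δ - θ^2/2| ≤ θ^4 * (5/96) := by
    have hcb := Real.cos_bound (x := θ) (by rw [abs_of_nonneg hθ0]; linarith)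
    rw [hcos, abs_of_nonneg hθ0] at hcb
    have e : δ - θ^2/2 = -((1-δ) - (1 - θ^2/2)) := by ring
    rw [e, abs_neg]
    exact hcb
  have hsb := Real.sin_bound (x := 2*θ) (by rw [abs_of_nonneg (by linarith)]; linarith)
  rw [abs_of_nonneg (by linarith : (0:ℝ) ≤ 2*θ)] at hsb
  have hX : (3:ℝ)/4 * (Real.arccos (1-δ) - (1-δ) * Real.sqrt (1 - (1-δ)^2)) =
      (3/8)*(2*θ - Real.sin (2*θ)) := by
    rw [Real.sin_two_mul, hsin, hcos, ← hθdef]; ring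
  have h2 : |(3:ℝ)/4 * (Real.arccos (1-δ) - (1-δ) * Real.sqrt (1 - (1-δ)^2)) - θ^3/2| ≤
      θ^4 * (5/16) := by
    rw [hX, abs_le]
    rw [abs_le] at hsb
    constructor <;> nlinarith [hsb.1, hsb.2]
  exact zlb_core hθ0 hθle hδ0 hδ h1 h2

private lemma zlb_zeta_right_fine {δ : ℝ} (hδ0 : 0 ≤ δ) (hδ : δ ≤ 1/100) :
    (23/20)*δ ≤ zetaLG (1+δ) ∧ zetaLG (1+δ) ≤ (137/100)*δ := by
  have hx := zlb_right_X hδ0 hδ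
  rw [zetaLG, if_pos (by linarith : (1:ℝ) ≤ 1 + δ)]
  exact zlb_conv hδ0 hx.1 hx.2

private lemma zlb_zeta_left_fine {δ : ℝ} (hδ0 : 0 < δ) (hδ : δ ≤ 1/100) :
    (23/20)*δ ≤ -zetaLG (1-δ) ∧ -zetaLG (1-δ) ≤ (137/100)*δ := by
  have hx := zlb_left_X hδ0.le hδ
  rw [zetaLG, if_neg (by intro h; linarith : ¬ (1:ℝ) ≤ 1 - δ), neg_neg]
  exact zlb_conv hδ0.le hx.1 hx.2

private lemma zlb_zeta_right_crude {δ : ℝ} (hδ0 : 0 ≤ δ) (hδ : δ ≤ 3/4) :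
    0 ≤ zetaLG (1+δ) ∧ zetaLG (1+δ) ≤ 150*δ := by
  by_cases hc : δ ≤ 1/100
  · have h := zlb_zeta_right_fine hδ0 hc
    constructor
    · linarith [h.1]
    · linarith [h.2]
  · push_neg at hc
    have hsq : (1+δ)^2 - 1 = δ^2 + 2*δ := by ring
    set r := Real.sqrt ((1+δ)^2 - 1) with hrdef
    have hr0 : 0 ≤ r := Real.sqrt_nonneg _
    have hr2 : r^2 = δ^2 + 2*δ := by rw [hrdef, Real.sq_sqrt (by nlinarith)]; exact hsq
    have hrle : r ≤ 29/20 := by nlinarith [sq_nonneg (r - 29/20)]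
    have hypos : (0:ℝ) < (1+δ) + r := by linarith
    have hy1 : (1:ℝ) ≤ (1+δ) + r := by linarith
    set θ := Real.log ((1+δ) + r) with hθdef
    have hθ0 : 0 ≤ θ := Real.log_nonneg hy1
    have hyinv : ((1+δ) + r)⁻¹ = (1+δ) - r := by
      have hne : (1+δ) + r ≠ 0 := ne_of_gt hypos
      field_simp
      nlinarith [hr2]
    have hexp : Real.exp θ = (1+δ) + r := Real.exp_log hypos
    have hexpneg : Real.exp (-θ) = (1+δ) - r := by rw [Real.exp_neg, hexp, hyinv]
    have hsinh : Real.sinh θ = r := by rw [Real.sinh_eq, hexp, hexpneg]; ring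
    have hθr : θ ≤ r := by
      rcases eq_or_lt_of_le hθ0 with h | h
      · rw [← h]; exact hr0
      · have := Real.self_lt_sinh_iff.mpr h
        rw [hsinh] at this
        exact le_of_lt this
    have hX0 : 0 ≤ (3:ℝ)/2 * ((1/2) * (1+δ) * r - (1/2) * θ) := by nlinarith
    rw [zetaLG, if_pos (by linarith : (1:ℝ) ≤ 1 + δ)]
    constructor
    · exact Real.rpow_nonneg hX0 _
    · apply zlb_rpow23_le hX0 (by positivity)
      nlinarith [hr2, hθ0, sq_nonneg (r - 29/20), sq_nonneg δ]

private lemma zlb_zeta_one : zetaLG 1 = 0 := by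
  rw [zetaLG, if_pos le_rfl]
  norm_num

private lemma zlb_zeta_left_crude {ξ : ℝ} (hξ : ξ < 1) : 0 ≤ -zetaLG ξ ∧ -zetaLG ξ ≤ 22/10 := by
  rw [zetaLG, if_neg (not_le.mpr hξ), neg_neg]
  have hX0 : 0 ≤ (3:ℝ)/4 * (Real.arccos ξ - ξ * Real.sqrt (1 - ξ^2)) := by
    rcases le_or_gt ξ 0 with h | h
    · have h1 : 0 ≤ Real.arccos ξ := Real.arccos_nonneg _
      have h2 : 0 ≤ -ξ * Real.sqrt (1 - ξ^2) := mul_nonneg (by linarith) (Real.sqrt_nonneg _)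
      nlinarith
    · set θ := Real.arccos ξ with hθdef
      have hθ0 : 0 ≤ θ := Real.arccos_nonneg _
      have hcos : Real.cos θ = ξ := Real.cos_arccos (by linarith) (by linarith)
      have hsin : Real.sin θ = Real.sqrt (1 - ξ^2) := Real.sin_arccos _
      have hs2 : Real.sin (2*θ) ≤ 2*θ := by
        rcases eq_or_lt_of_le hθ0 with hh | hh
        · rw [← hh]; norm_num
        · exact le_of_lt (Real.sin_lt (by linarith))
      rw [Real.sin_two_mul, hsin, hcos] at hs2
      nlinarith
  constructor
  · exact Real.rpow_nonneg hX0 _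
  · apply zlb_rpow23_le hX0 (by norm_num)
    have h1 : Real.arccos ξ ≤ Real.pi := Real.arccos_le_pi _
    have h2 : -(ξ * Real.sqrt (1 - ξ^2)) ≤ 1 := by
      rcases le_or_gt (1 - ξ^2) 0 with h | h
      · have hz : Real.sqrt (1 - ξ^2) = 0 := Real.sqrt_eq_zero'.mpr h
        rw [hz]; norm_num
      · have hs1 : Real.sqrt (1-ξ^2) ≤ 1 := Real.sqrt_le_one.mpr (by nlinarith)
        have hξ1 : -1 ≤ ξ := by nlinarith
        nlinarith [Real.sqrt_nonneg (1-ξ^2)]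
    have hπ : Real.pi ≤ 3.15 := by linarith [Real.pi_lt_d2]
    have hXle : (3:ℝ)/4 * (Real.arccos ξ - ξ * Real.sqrt (1 - ξ^2)) ≤ 32/10 := by nlinarith
    nlinarith [hX0, hXle]

private lemma zlb_rpow_pow_eq {x : ℝ} (hx : 0 ≤ x) (a b : ℝ) (n : ℕ) (h : a * n = b) :
    (x^a)^n = x^b := by
  rw [← Real.rpow_natCast (x^a) n, ← Real.rpow_mul hx, h]

private lemma zlb_two_neg_half_pow6 : ((2:ℝ) ^ (-(1:ℝ)/2))^6 = 1/8 := by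
  rw [zlb_rpow_pow_eq (by norm_num) (-(1:ℝ)/2) (-3) 6 (by norm_num)]
  rw [show (-3:ℝ) = -((3:ℕ):ℝ) by norm_num, Real.rpow_neg (by norm_num), Real.rpow_natCast]
  norm_num

private lemma zlb_sigma_pos (N : ℕ) (hN : 1 ≤ N) (κ : ℝ) (hκ : 1 ≤ κ) :
    0 < tauN N / Real.sqrt κ := by
  apply div_pos
  · apply mul_pos (Real.rpow_pos_of_pos (by norm_num) _)
    have : (0:ℝ) < N := by exact_mod_cast hN
    exact Real.rpow_pos_of_pos this _
  · exact Real.sqrt_pos.mpr (by linarith)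

private lemma zlb_sigma_pow6 (N : ℕ) (hN : 1 ≤ N) (κ : ℝ) (hκ : 1 ≤ κ) :
    (tauN N / Real.sqrt κ)^6 = 1/(8 * N * κ^3) := by
  have hN0 : (0:ℝ) < N := by exact_mod_cast hN
  have hNf : (((N:ℝ)) ^ (-(1:ℝ)/6))^6 = 1/(N:ℝ) := by
    rw [zlb_rpow_pow_eq (le_of_lt hN0) (-(1:ℝ)/6) (-1) 6 (by norm_num)]
    rw [Real.rpow_neg_one]
    exact (one_div _).symm
  have hsq : (Real.sqrt κ)^6 = κ^3 := by
    rw [show (Real.sqrt κ)^6 = ((Real.sqrt κ)^2)^3 by ring, Real.sq_sqrt (by linarith)]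
  rw [div_pow, tauN, mul_pow, zlb_two_neg_half_pow6, hNf, hsq]
  field_simp

private lemma zlb_P_pow6 (N : ℕ) (hN : 1 ≤ N) (κ : ℝ) (hκ : 1 ≤ κ) :
    (κ^((2:ℝ)/3) * (tauN N / Real.sqrt κ))^6 = κ/(8 * N) := by
  have hκ0 : (0:ℝ) ≤ κ := by linarith
  have h1 : (κ^((2:ℝ)/3))^6 = κ^(4:ℕ) := by
    rw [zlb_rpow_pow_eq hκ0 ((2:ℝ)/3) 4 6 (by norm_num),
      show (4:ℝ) = ((4:ℕ):ℝ) by norm_num, Real.rpow_natCast]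
  rw [mul_pow, h1, zlb_sigma_pow6 N hN κ hκ]
  have hκne : κ ≠ 0 := by linarith
  have hNne : (N:ℝ) ≠ 0 := by positivity
  field_simp

end ZlbAux
set_option maxHeartbeats 1600000 in
/-- Local behavior of `s ↦ κ^{2/3} ζ(1 + σs)` for `κ ∈ {2N+1, 2N-1}`, `σ = τ_N/√κ`:
(i) `|κ^{2/3}ζ - s| ≤ |s|/4` for `s_L ≤ s ≤ N^{1/6}` and `N` large;
(ii) `|κ^{2/3}ζ| ≤ C|s|` for `s_L ≤ s ≤ N^{2/3}` and all `N ≥ 1`. -/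
theorem zetaLG_local_bounds (sL : ℝ) (hsL : sL < 0) :
    (∃ N₀ : ℕ, ∀ N : ℕ, N₀ ≤ N → ∀ κ ∈ ({2 * (N : ℝ) + 1, 2 * (N : ℝ) - 1} : Set ℝ),
      ∀ s : ℝ, sL ≤ s → s ≤ (N : ℝ) ^ ((1 : ℝ) / 6) →
        |κ ^ ((2 : ℝ) / 3) * zetaLG (1 + tauN N / Real.sqrt κ * s) - s| ≤ |s| / 4) ∧
    (∃ C : ℝ, ∀ N : ℕ, 1 ≤ N → ∀ κ ∈ ({2 * (N : ℝ) + 1, 2 * (N : ℝ) - 1} : Set ℝ),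
      ∀ s : ℝ, sL ≤ s → s ≤ (N : ℝ) ^ ((2 : ℝ) / 3) →
        |κ ^ ((2 : ℝ) / 3) * zetaLG (1 + tauN N / Real.sqrt κ * s)| ≤ C * |s|) := by
  constructor
  · -- part (i)
    refine ⟨2601 + ⌈(100*(1 - sL))^2⌉₊, ?_⟩
    intro N hN κ hκmem s hsl hsu
    simp only [Set.mem_insert_iff, Set.mem_singleton_iff] at hκmem
    have hN2601 : (2601:ℕ) ≤ N := le_trans (Nat.le_add_right _ _) hN
    have hNnat1 : (1:ℕ) ≤ N := by omega
    have hNR : (2601:ℝ) ≤ (N:ℝ) := by exact_mod_cast hN2601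
    have hNsq : (100*(1 - sL))^2 ≤ (N:ℝ) := by
      have h1 : (⌈(100*(1 - sL))^2⌉₊ : ℝ) ≤ (N:ℝ) := by
        exact_mod_cast le_trans (Nat.le_add_left _ _) hN
      exact le_trans (Nat.le_ceil _) h1
    have hκ1 : (1:ℝ) ≤ κ := by rcases hκmem with h | h <;> rw [h] <;> linarith
    have hκ5201 : (5201:ℝ) ≤ κ := by rcases hκmem with h | h <;> rw [h] <;> linarith
    have hκ2N1 : κ ≤ 2*(N:ℝ) + 1 := by rcases hκmem with h | h <;> rw [h] <;> linarith
    have hκ2N1' : 2*(N:ℝ) - 1 ≤ κ := by rcases hκmem with h | h <;> rw [h] <;> linarith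
    have hκN : (N:ℝ) ≤ κ := by linarith
    set σ := tauN N / Real.sqrt κ with hσdef
    have hσpos : 0 < σ := zlb_sigma_pos N hNnat1 κ hκ1
    have hσ6 : σ^6 = 1/(8 * N * κ^3) := zlb_sigma_pow6 N hNnat1 κ hκ1
    have hA0 : (0:ℝ) < κ^((2:ℝ)/3) := Real.rpow_pos_of_pos (by linarith) _
    set P := κ^((2:ℝ)/3) * σ with hPdef
    have hP6 : P^6 = κ/(8 * N) := zlb_P_pow6 N hNnat1 κ hκ1
    have hP0 : 0 ≤ P := mul_nonneg hA0.le hσpos.le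
    have hκ3 : (5201:ℝ)^3 ≤ κ^3 := pow_le_pow_left₀ (by norm_num) hκ5201 3
    have hPlo : 7929/10000 ≤ P := by
      apply le_of_pow_le_pow_left₀ (n := 6) (by norm_num) hP0
      rw [hP6]
      have h1 : (2486/10000:ℝ) ≤ κ/(8*N) := by
        rw [le_div_iff₀ (by positivity)]
        linarith
      have h2 : ((7929:ℝ)/10000)^6 ≤ 2486/10000 := by norm_num
      linarith
    have hPhi : P ≤ 7945/10000 := by
      apply le_of_pow_le_pow_left₀ (n := 6) (by norm_num) (by norm_num)
      rw [hP6]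
      have h1 : κ/(8*N) ≤ 25006/100000 := by
        rw [div_le_iff₀ (by positivity)]
        linarith
      have h2 : (25006/100000:ℝ) ≤ ((7945:ℝ)/10000)^6 := by norm_num
      linarith
    rcases lt_trichotomy s 0 with hs | hs | hs
    · -- s < 0
      have hms : 0 < -s := by linarith
      have hδpos : 0 < σ * (-s) := mul_pos hσpos hms
      have hσN : σ ≤ 1 / Real.sqrt (N:ℝ) := by
        apply le_of_pow_le_pow_left₀ (n := 6) (by norm_num) (by positivity)
        have hsq6 : (1 / Real.sqrt (N:ℝ))^6 = 1/(N:ℝ)^3 := by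
          rw [div_pow, one_pow, show (Real.sqrt (N:ℝ))^6 = ((Real.sqrt (N:ℝ))^2)^3 by ring,
            Real.sq_sqrt (by positivity)]
        rw [hσ6, hsq6, div_le_div_iff₀ (by positivity) (by positivity)]
        have hN3 : (N:ℝ)^3 ≤ κ^3 := pow_le_pow_left₀ (by positivity) hκN 3
        have h8 : κ^3 ≤ (N:ℝ)*κ^3 := le_mul_of_one_le_left (by positivity) (by linarith)
        nlinarith [hN3, h8]
      have hsqrtN : 100*(1 - sL) ≤ Real.sqrt (N:ℝ) := by
        rw [show (100*(1 - sL)) = 100*(1-sL) by ring]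
        exact (Real.le_sqrt (by nlinarith) (by positivity)).mpr hNsq
      have hsqrtNpos : 0 < Real.sqrt (N:ℝ) := by positivity
      have hδle : σ * (-s) ≤ 1/100 := by
        have h1 : σ * (-s) ≤ σ * (-sL) :=
          mul_le_mul_of_nonneg_left (by linarith) hσpos.le
        have h2 : σ * (-sL) ≤ (1/Real.sqrt (N:ℝ)) * (-sL) :=
          mul_le_mul_of_nonneg_right hσN (by linarith)
        have h3 : (1/Real.sqrt (N:ℝ)) * (-sL) ≤ (1/Real.sqrt (N:ℝ)) * (1 - sL) := by
          apply mul_le_mul_of_nonneg_left (by linarith) (by positivity)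
        have h4 : (1/Real.sqrt (N:ℝ)) * (1 - sL) ≤ 1/100 := by
          rw [div_mul_eq_mul_div, div_le_div_iff₀ hsqrtNpos (by norm_num)]
          linarith
        linarith
      have hrw : 1 + σ * s = 1 - σ * (-s) := by ring
      rw [hrw]
      obtain ⟨hlo, hhi⟩ := zlb_zeta_left_fine hδpos hδle
      set Z := zetaLG (1 - σ * (-s)) with hZdef
      have hmul1 : κ^((2:ℝ)/3) * (-Z) ≥ κ^((2:ℝ)/3) * ((23/20)*(σ*(-s))) :=
        mul_le_mul_of_nonneg_left hlo hA0.le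
      have hmul2 : κ^((2:ℝ)/3) * (-Z) ≤ κ^((2:ℝ)/3) * ((137/100)*(σ*(-s))) :=
        mul_le_mul_of_nonneg_left hhi hA0.le
      have heq1 : κ^((2:ℝ)/3) * ((23/20)*(σ*(-s))) = (23/20)*(P*(-s)) := by
        rw [hPdef]; ring
      have heq2 : κ^((2:ℝ)/3) * ((137/100)*(σ*(-s))) = (137/100)*(P*(-s)) := by
        rw [hPdef]; ring
      have hPs1 : (7929/10000)*(-s) ≤ P*(-s) := mul_le_mul_of_nonneg_right hPlo hms.le
      have hPs2 : P*(-s) ≤ (7945/10000)*(-s) := mul_le_mul_of_nonneg_right hPhi hms.le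
      rw [abs_of_neg hs, abs_le]
      constructor
      · nlinarith [hmul2, heq2, hPs2]
      · nlinarith [hmul1, heq1, hPs1]
    · -- s = 0
      rw [hs]
      norm_num [zlb_zeta_one]
    · -- s > 0
      have hδpos : 0 < σ * s := mul_pos hσpos hs
      have hδle : σ * s ≤ 1/100 := by
        have hW : σ * (N:ℝ)^((1:ℝ)/6) ≤ 1/100 := by
          apply le_of_pow_le_pow_left₀ (n := 6) (by norm_num) (by norm_num)
          have hN16 : (((N:ℝ)) ^ ((1:ℝ)/6))^6 = (N:ℝ) := by
            rw [zlb_rpow_pow_eq (by positivity) ((1:ℝ)/6) 1 6 (by norm_num), Real.rpow_one]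
          rw [mul_pow, hσ6, hN16]
          rw [div_mul_eq_mul_div, one_mul, div_le_iff₀ (by positivity)]
          have hNk : (N:ℝ) * 5201^3 ≤ (N:ℝ) * κ^3 :=
            mul_le_mul_of_nonneg_left hκ3 (by positivity)
          nlinarith [hNk]
        have := mul_le_mul_of_nonneg_left hsu hσpos.le
        linarith
      obtain ⟨hlo, hhi⟩ := zlb_zeta_right_fine hδpos.le hδle
      set Z := zetaLG (1 + σ * s) with hZdef
      have hmul1 : κ^((2:ℝ)/3) * Z ≥ κ^((2:ℝ)/3) * ((23/20)*(σ*s)) :=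
        mul_le_mul_of_nonneg_left hlo hA0.le
      have hmul2 : κ^((2:ℝ)/3) * Z ≤ κ^((2:ℝ)/3) * ((137/100)*(σ*s)) :=
        mul_le_mul_of_nonneg_left hhi hA0.le
      have heq1 : κ^((2:ℝ)/3) * ((23/20)*(σ*s)) = (23/20)*(P*s) := by rw [hPdef]; ring
      have heq2 : κ^((2:ℝ)/3) * ((137/100)*(σ*s)) = (137/100)*(P*s) := by rw [hPdef]; ring
      have hPs1 : (7929/10000)*s ≤ P*s := mul_le_mul_of_nonneg_right hPlo hs.le
      have hPs2 : P*s ≤ (7945/10000)*s := mul_le_mul_of_nonneg_right hPhi hs.le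
      rw [abs_of_pos hs, abs_le]
      constructor
      · nlinarith [hmul1, heq1, hPs1]
      · nlinarith [hmul2, heq2, hPs2]
  · -- part (ii)
    refine ⟨400, ?_⟩
    intro N hN κ hκmem s hsl hsu
    simp only [Set.mem_insert_iff, Set.mem_singleton_iff] at hκmem
    have hNR : (1:ℝ) ≤ (N:ℝ) := by exact_mod_cast hN
    have hκ1 : (1:ℝ) ≤ κ := by rcases hκmem with h | h <;> rw [h] <;> linarith
    have hκ2N1 : κ ≤ 2*(N:ℝ) + 1 := by rcases hκmem with h | h <;> rw [h] <;> linarith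
    have hκN : (N:ℝ) ≤ κ := by rcases hκmem with h | h <;> rw [h] <;> linarith
    set σ := tauN N / Real.sqrt κ with hσdef
    have hσpos : 0 < σ := zlb_sigma_pos N hN κ hκ1
    have hσ6 : σ^6 = 1/(8 * N * κ^3) := zlb_sigma_pow6 N hN κ hκ1
    have hA0 : (0:ℝ) < κ^((2:ℝ)/3) := Real.rpow_pos_of_pos (by linarith) _
    set P := κ^((2:ℝ)/3) * σ with hPdef
    have hP6 : P^6 = κ/(8 * N) := zlb_P_pow6 N hN κ hκ1
    have hP0 : 0 ≤ P := mul_nonneg hA0.le hσpos.le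
    have hPhi : P ≤ 6/5 := by
      apply le_of_pow_le_pow_left₀ (n := 6) (by norm_num) (by norm_num)
      rw [hP6]
      have h1 : κ/(8*N) ≤ 3/8 := by
        rw [div_le_iff₀ (by positivity)]
        linarith
      have h2 : ((3:ℝ)/8) ≤ ((6:ℝ)/5)^6 := by norm_num
      linarith
    rcases lt_trichotomy s 0 with hs | hs | hs
    · -- s < 0
      have hms : 0 < -s := by linarith
      have hδpos : 0 < σ * (-s) := mul_pos hσpos hms
      have hrw : 1 + σ * s = 1 - σ * (-s) := by ring
      rw [hrw, abs_of_neg hs]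
      by_cases hc : σ * (-s) ≤ 1/100
      · obtain ⟨hlo, hhi⟩ := zlb_zeta_left_fine hδpos hc
        set Z := zetaLG (1 - σ * (-s)) with hZdef
        have hZneg : Z ≤ 0 := by nlinarith
        have habs : |κ^((2:ℝ)/3) * Z| = κ^((2:ℝ)/3) * (-Z) := by
          rw [abs_of_nonpos (mul_nonpos_of_nonneg_of_nonpos hA0.le hZneg)]; ring
        rw [habs]
        have hmul2 : κ^((2:ℝ)/3) * (-Z) ≤ κ^((2:ℝ)/3) * ((137/100)*(σ*(-s))) :=
          mul_le_mul_of_nonneg_left hhi hA0.le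
        have heq2 : κ^((2:ℝ)/3) * ((137/100)*(σ*(-s))) = (137/100)*(P*(-s)) := by
          rw [hPdef]; ring
        have hPs2 : P*(-s) ≤ (6/5)*(-s) := mul_le_mul_of_nonneg_right hPhi hms.le
        nlinarith [hmul2, heq2, hPs2]
      · push_neg at hc
        obtain ⟨hlo, hhi⟩ := zlb_zeta_left_crude (show 1 - σ * (-s) < 1 by linarith)
        set Z := zetaLG (1 - σ * (-s)) with hZdef
        have hZneg : Z ≤ 0 := by linarith
        have habs : |κ^((2:ℝ)/3) * Z| = κ^((2:ℝ)/3) * (-Z) := by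
          rw [abs_of_nonpos (mul_nonpos_of_nonneg_of_nonpos hA0.le hZneg)]; ring
        rw [habs]
        have h1 : κ^((2:ℝ)/3) * (-Z) ≤ (22/10) * κ^((2:ℝ)/3) :=  by nlinarith
        have h2 : ((22/10) * κ^((2:ℝ)/3)) * σ ≤ (400*(-s)) * σ := by
          have e1 : ((22/10) * κ^((2:ℝ)/3)) * σ = (22/10)*P := by rw [hPdef]; ring
          have e2 : (400*(-s)) * σ = 400*(σ*(-s)) := by ring
          rw [e1, e2]
          nlinarith
        have h3 : (22/10) * κ^((2:ℝ)/3) ≤ 400*(-s) := le_of_mul_le_mul_right h2 hσpos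
        linarith
    · -- s = 0
      rw [hs]
      norm_num [zlb_zeta_one]
    · -- s > 0
      have hδpos : 0 < σ * s := mul_pos hσpos hs
      have hδ34 : σ * s ≤ 3/4 := by
        have hU : σ * (N:ℝ)^((2:ℝ)/3) ≤ 3/4 := by
          apply le_of_pow_le_pow_left₀ (n := 6) (by norm_num) (by norm_num)
          have hN23 : (((N:ℝ)) ^ ((2:ℝ)/3))^6 = (N:ℝ)^(4:ℕ) := by
            rw [zlb_rpow_pow_eq (by positivity) ((2:ℝ)/3) 4 6 (by norm_num),
              show (4:ℝ) = ((4:ℕ):ℝ) by norm_num, Real.rpow_natCast]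
          rw [mul_pow, hσ6, hN23]
          rw [div_mul_eq_mul_div, one_mul, div_le_iff₀ (by positivity)]
          have hN3 : (N:ℝ)^3 ≤ κ^3 := pow_le_pow_left₀ (by positivity) hκN 3
          have hNk : (N:ℝ) * (N:ℝ)^3 ≤ (N:ℝ) * κ^3 :=
            mul_le_mul_of_nonneg_left hN3 (by positivity)
          nlinarith [hNk, mul_nonneg (show (0:ℝ) ≤ (N:ℝ) by positivity)
            (show (0:ℝ) ≤ κ^3 by positivity)]
        have := mul_le_mul_of_nonneg_left hsu hσpos.le
        linarith
      obtain ⟨hlo, hhi⟩ := zlb_zeta_right_crude hδpos.le hδ34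
      set Z := zetaLG (1 + σ * s) with hZdef
      have habs : |κ^((2:ℝ)/3) * Z| = κ^((2:ℝ)/3) * Z :=
        abs_of_nonneg (mul_nonneg hA0.le hlo)
      rw [abs_of_pos hs, habs]
      have hmul2 : κ^((2:ℝ)/3) * Z ≤ κ^((2:ℝ)/3) * (150*(σ*s)) :=
        mul_le_mul_of_nonneg_left hhi hA0.le
      have heq2 : κ^((2:ℝ)/3) * (150*(σ*s)) = 150*(P*s) := by rw [hPdef]; ring
      have hPs2 : P*s ≤ (6/5)*s := mul_le_mul_of_nonneg_right hPhi hs.le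
      nlinarith [hmul2, heq2, hPs2]
end

section
/- There exists a constant C such that for all ξ ≥ 2: |½ ξ √(ξ²−1) − ½ log(ξ + √(ξ²−1)) − ½ (ξ² − log ξ − ½ − log 2)| ≤ C ξ^{−2}; equivalently, the function (2/3) ζ(ξ)^{3/2} = ½ ξ √(ξ²−1) − ½ log(ξ + √(ξ²−1)) equals ½ (ξ² − log ξ − ½ − log 2) + O(ξ^{−2}) as ξ → ∞. -/
open Real Filter MeasureTheory

set_option maxHeartbeats 1600000 in
/-- Asymptotics of `(2/3) ζ(ξ)^{3/2} = ½ ξ√(ξ²-1) - ½ log(ξ + √(ξ²-1))`: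
it equals `½(ξ² - log ξ - ½ - log 2) + O(ξ^{-2})` as `ξ → ∞`. -/
theorem zeta_three_halves_asymptotics :
    ∃ C : ℝ, ∀ ξ : ℝ, 2 ≤ ξ →
      |(1 / 2) * ξ * Real.sqrt (ξ ^ 2 - 1) -
          (1 / 2) * Real.log (ξ + Real.sqrt (ξ ^ 2 - 1)) -
          (1 / 2) * (ξ ^ 2 - Real.log ξ - 1 / 2 - Real.log 2)| ≤
        C * ξ ^ (-(2 : ℝ)) := by
  refine ⟨1, fun ξ hξ => ?_⟩
  have hξ0 : (0:ℝ) < ξ := by linarith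
  have h1 : (1:ℝ) ≤ ξ ^ 2 := by nlinarith
  set s := Real.sqrt (ξ ^ 2 - 1) with hs
  have hs0 : 0 ≤ s := Real.sqrt_nonneg _
  have hs2 : s ^ 2 = ξ ^ 2 - 1 := Real.sq_sqrt (by linarith)
  -- upper bound on s
  have hbu : (0:ℝ) ≤ ξ - 1/(2*ξ) := by
    have h2 : 1/(2*ξ) ≤ 1 := by rw [div_le_one (by linarith)]; linarith
    linarith
  have hsle : s ≤ ξ - 1/(2*ξ) := by
    have hkey : ξ ^ 2 - 1 ≤ (ξ - 1/(2*ξ)) ^ 2 := by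
      have hc : ξ * (1/(2*ξ)) = 1/2 := by field_simp
      nlinarith [sq_nonneg (1/(2*ξ))]
    calc s ≤ Real.sqrt ((ξ - 1/(2*ξ)) ^ 2) := Real.sqrt_le_sqrt hkey
      _ = ξ - 1/(2*ξ) := Real.sqrt_sq hbu
  -- lower bound on s
  have hbl : (0:ℝ) ≤ ξ - 1/(2*ξ) - 1/ξ^3 := by
    have h2 : 1/(2*ξ) ≤ 1/2 := by
      rw [div_le_div_iff₀ (by linarith) (by norm_num)]; linarith
    have h3 : 1/ξ^3 ≤ 1/2 := by
      rw [div_le_div_iff₀ (by positivity) (by norm_num)]; nlinarith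
    linarith
  have hsge : ξ - 1/(2*ξ) - 1/ξ^3 ≤ s := by
    have hkey : (ξ - 1/(2*ξ) - 1/ξ^3) ^ 2 ≤ ξ ^ 2 - 1 := by
      have hc1 : ξ * (1/(2*ξ)) = 1/2 := by field_simp
      have hc2 : ξ * (1/ξ^3) = 1/ξ^2 := by field_simp
      have hc3 : (1/(2*ξ)) * (1/ξ^3) = 1/(2*ξ^4) := by field_simp
      have hc4 : (1/(2*ξ))^2 = 1/(4*ξ^2) := by field_simp; ring
      have hc5 : (1/ξ^3)^2 = 1/ξ^6 := by field_simp
      have h2 : (2:ℝ) ≤ ξ := hξ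
      have hp2 : (0:ℝ) < ξ^2 := by positivity
      have hp4 : (0:ℝ) < ξ^4 := by positivity
      have hp6 : (0:ℝ) < ξ^6 := by positivity
      have e1 : 1/ξ^2 ≥ 1/(4*ξ^2) + 1/(2*ξ^4) + 1/ξ^6 + 1/ξ^2 - 1/ξ^2 + 1/(4*ξ^2)*0 := by
        have d1 : 1/(2*ξ^4) ≤ 1/(4*ξ^2) := by
          rw [div_le_div_iff₀ (by positivity) (by positivity)]
          nlinarith [mul_nonneg (show (0:ℝ) ≤ ξ^2 - 4 by nlinarith) hp2.le]
        have d2 : 1/ξ^6 ≤ 1/(4*ξ^2) := by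
          rw [div_le_div_iff₀ (by positivity) (by positivity)]
          nlinarith [mul_nonneg (show (0:ℝ) ≤ ξ^4 - 4 by nlinarith [sq_nonneg (ξ^2-1)]) hp2.le]
        have d3 : 1/(4*ξ^2) + 1/(4*ξ^2) + 1/(4*ξ^2) ≤ 1/ξ^2 := by
          rw [div_add_div _ _ (by positivity) (by positivity)]
          rw [div_add_div _ _ (by positivity) (by positivity)]
          rw [div_le_div_iff₀ (by positivity) (by positivity)]
          ring_nf; nlinarith
        linarith
      nlinarith
    calc ξ - 1/(2*ξ) - 1/ξ^3 = Real.sqrt ((ξ - 1/(2*ξ) - 1/ξ^3) ^ 2) :=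
          (Real.sqrt_sq hbl).symm
      _ ≤ s := Real.sqrt_le_sqrt hkey
  have hsleξ : s ≤ ξ := by
    have : 1/(2*ξ) > 0 := by positivity
    linarith
  have hsgeξ : ξ - 1/ξ ≤ s := by
    have h4 : 1/(2*ξ) + 1/ξ^3 ≤ 1/ξ := by
      rw [div_add_div _ _ (by positivity : (2*ξ:ℝ) ≠ 0) (by positivity : (ξ:ℝ)^3 ≠ 0),
        div_le_div_iff₀ (by positivity) hξ0]
      nlinarith [mul_nonneg (show (0:ℝ) ≤ ξ^2 - 2 by nlinarith) (sq_nonneg ξ)]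
    linarith
  -- bound on ξ*s - (ξ^2 - 1/2)
  have hc1 : ξ * (1/(2*ξ)) = 1/2 := by field_simp
  have hc2 : ξ * (1/ξ^3) = 1/ξ^2 := by field_simp
  have hA1 : ξ * s - (ξ^2 - 1/2) ≤ 0 := by
    have h := mul_le_mul_of_nonneg_left hsle hξ0.le
    have e : ξ * (ξ - 1/(2*ξ)) = ξ^2 - 1/2 := by rw [mul_sub, hc1]; ring
    linarith
  have hA2 : -(1/ξ^2) ≤ ξ * s - (ξ^2 - 1/2) := by
    have h := mul_le_mul_of_nonneg_left hsge hξ0.le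
    have e : ξ * (ξ - 1/(2*ξ) - 1/ξ^3) = ξ^2 - 1/2 - 1/ξ^2 := by
      rw [mul_sub, mul_sub, hc1, hc2]; ring
    linarith
  -- bounds on the log term L = log(ξ+s) - log ξ - log 2
  have hxs0 : (0:ℝ) < ξ + s := by linarith
  have hlog1 : Real.log (ξ + s) ≤ Real.log 2 + Real.log ξ := by
    rw [← Real.log_mul (by norm_num) (ne_of_gt hξ0)]
    exact Real.log_le_log hxs0 (by linarith)
  have hlog2 : Real.log 2 + Real.log ξ - Real.log (ξ + s) ≤ 1/ξ^2 := by
    have h2ξ : (0:ℝ) < 2 * ξ := by linarith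
    have heq : Real.log 2 + Real.log ξ - Real.log (ξ + s) =
        Real.log ((2*ξ)/(ξ+s)) := by
      rw [Real.log_div (ne_of_gt h2ξ) (ne_of_gt hxs0),
        Real.log_mul (by norm_num) (ne_of_gt hξ0)]
    rw [heq]
    have hle := Real.log_le_sub_one_of_pos (show (0:ℝ) < (2*ξ)/(ξ+s) by positivity)
    have hq : (2*ξ)/(ξ+s) - 1 ≤ 1/ξ^2 := by
      rw [div_sub_one (ne_of_gt hxs0), div_le_div_iff₀ hxs0 (by positivity)]
      have : ξ - s ≤ 1/ξ := by linarith
      have hr : (2*ξ - (ξ+s)) = ξ - s := by ring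
      rw [hr]
      have h1 : (ξ - s) * ξ^2 ≤ (1/ξ) * ξ^2 := by
        apply mul_le_mul_of_nonneg_right this (by positivity)
      have h2 : (1/ξ) * ξ^2 = ξ := by field_simp
      have h3 : ξ ≤ ξ + s := by linarith
      calc (ξ - s) * ξ^2 ≤ (1/ξ) * ξ^2 := h1
        _ = ξ := h2
        _ ≤ 1 * (ξ + s) := by linarith
    linarith
  -- assemble
  have hrpow : ξ ^ (-(2:ℝ)) = 1/ξ^2 := by
    rw [Real.rpow_neg hξ0.le, show ((2:ℝ)) = ((2:ℕ):ℝ) by norm_num,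
      Real.rpow_natCast, one_div]
  rw [hrpow, one_mul]
  rw [abs_le]
  constructor <;> linarith
end

section
/- Fix N ∈ ℕ with N ≥ 1, and set κ = 2N+1 and N₊ = N + ½. Then the limit as ξ → ∞ of φ_N(√κ · ξ) · 2√π · κ^{1/6} · (ξ² − 1)^{1/4} · exp{κ · (½ ξ √(ξ²−1) − ½ log(ξ + √(ξ²−1)))} exists and equals 2√π · κ^{1/6} · h_N^{−1/2} · (2N₊)^{N/2} · e^{−N₊/2} · 2^{N − N₊}, where h_N = √π · 2^N · N!. -/
open Real Filter MeasureTheory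

/-! For large `ξ`, `H_N(x) ∼ 2^N x^N` and `(ξ² - 1)^{1/4} ∼ ξ^{1/2}`, while the phase
`½ ξ √(ξ² - 1) - ½ log (ξ + √(ξ² - 1)) = ∫₁^ξ √(t² - 1) dt` equals
`ξ²/2 - ½ log ξ - 1/4 - ½ log 2 + o(1)`. Multiplied by `κ = 2N + 1`, the quadratic term cancels the
Gaussian `e^{-κξ²/2}` of `φ_N(√κ ξ)` and the logarithm cancels `ξ^N · ξ^{1/2}`, which leaves the
constant. -/

open Polynomial Topology

lemma physHermite_eq_aeval_hermite (n : ℕ) (x : ℝ) :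
    physHermite n x = √2 ^ n * aeval (√2 * x) (hermite n) := by
  have hsq : √2 ^ 2 = 2 := Real.sq_sqrt zero_le_two
  have hgauss : ContDiff ℝ n (fun y : ℝ => rexp (-(y ^ 2 / 2))) := by fun_prop
  have hscale : (fun t : ℝ => rexp (-t ^ 2)) = fun t => rexp (-((√2 * t) ^ 2 / 2)) := by
    funext t
    rw [mul_pow, hsq]
    ring_nf
  rw [physHermite, hscale, iteratedDeriv_comp_const_mul hgauss]
  beta_reduce
  rw [iteratedDeriv_eq_iterate, deriv_gaussian_eq_hermite_mul_gaussian, mul_pow, hsq]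
  have hexp : rexp (x ^ 2) * rexp (-(2 * x ^ 2 / 2)) = 1 := by
    rw [← Real.exp_add]; ring_nf; exact Real.exp_zero
  have hsign : (-1 : ℝ) ^ n * (-1) ^ n = 1 := by rw [← mul_pow]; norm_num
  linear_combination (√2 ^ n * aeval (√2 * x) (hermite n)) *
    ((-1 : ℝ) ^ n * (-1) ^ n * hexp + hsign)

lemma tendsto_aeval_hermite_div_pow (n : ℕ) :
    Tendsto (fun x : ℝ => aeval x (hermite n) / x ^ n) atTop (𝓝 1) := by
  have hmonic : ((hermite n).map (Int.castRingHom ℝ)).Monic := (hermite_monic n).map _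
  have hdeg : ((hermite n).map (Int.castRingHom ℝ)).degree = (X ^ n : ℝ[X]).degree := by
    rw [degree_map_eq_of_injective Int.cast_injective, degree_hermite, degree_X_pow]
  simpa [hmonic.leadingCoeff, aeval_def, eval_map] using
    div_tendsto_atTop_leadingCoeff_div_of_degree_eq _ _ hdeg

lemma tendsto_physHermite_div_pow (n : ℕ) :
    Tendsto (fun x : ℝ => physHermite n x / x ^ n) atTop (𝓝 (2 ^ n)) := by
  have h := ((tendsto_aeval_hermite_div_pow n).comp
    (tendsto_id.const_mul_atTop (by positivity : (0 : ℝ) < √2))).const_mul (2 ^ n : ℝ)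
  rw [mul_one] at h
  refine h.congr' ?_
  filter_upwards [eventually_gt_atTop 0] with x hx
  have h2 : (2 : ℝ) ^ n = √2 ^ n * √2 ^ n := by rw [← mul_pow, Real.mul_self_sqrt zero_le_two]
  simp only [Function.comp_apply, id, physHermite_eq_aeval_hermite, mul_pow, h2]
  field_simp

lemma tendsto_physHermite_const_mul_div_pow (n : ℕ) {c : ℝ} (hc : 0 < c) :
    Tendsto (fun ξ : ℝ => physHermite n (c * ξ) / ξ ^ n) atTop (𝓝 ((2 * c) ^ n)) := by
  have h := ((tendsto_physHermite_div_pow n).comp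
    (tendsto_id.const_mul_atTop hc)).const_mul (c ^ n)
  rw [← mul_pow, mul_comm c] at h
  refine h.congr' ?_
  filter_upwards [eventually_gt_atTop 0] with ξ hξ
  simp only [Function.comp_apply, id, mul_pow]
  field_simp

lemma tendsto_one_sub_inv_sq : Tendsto (fun ξ : ℝ => 1 - 1 / ξ ^ 2) atTop (𝓝 1) := by
  simpa using tendsto_const_nhds.sub ((tendsto_pow_atTop two_ne_zero).inv_tendsto_atTop.congr
    fun ξ : ℝ => (one_div (ξ ^ 2)).symm)

lemma tendsto_sqrt_sq_sub_one_div_self :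
    Tendsto (fun ξ : ℝ => √(ξ ^ 2 - 1) / ξ) atTop (𝓝 1) := by
  have h := (Real.continuous_sqrt.tendsto 1).comp tendsto_one_sub_inv_sq
  rw [Real.sqrt_one] at h
  refine h.congr' ?_
  filter_upwards [eventually_gt_atTop 0] with ξ hξ
  rw [Function.comp_apply, ← Real.sqrt_sq hξ.le, ← Real.sqrt_div' _ (sq_nonneg ξ),
    Real.sqrt_sq hξ.le]
  congr 1
  field_simp

lemma tendsto_phase_sub_sq_add_log :
    Tendsto (fun ξ : ℝ => 1 / 2 * ξ * √(ξ ^ 2 - 1) - 1 / 2 * Real.log (ξ + √(ξ ^ 2 - 1))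
      - ξ ^ 2 / 2 + 1 / 2 * Real.log ξ) atTop (𝓝 (-1 / 4 - Real.log 2 / 2)) := by
  have hg := tendsto_sqrt_sq_sub_one_div_self.const_add 1
  have h2 : (1 : ℝ) + 1 ≠ 0 := by norm_num
  have h := ((tendsto_const_nhds (x := (-1 / 2 : ℝ))).div hg h2).sub ((hg.log h2).div_const 2)
  rw [show (-1 / 2 : ℝ) / (1 + 1) - Real.log (1 + 1) / 2 = -1 / 4 - Real.log 2 / 2 by norm_num] at h
  refine h.congr' ?_
  filter_upwards [eventually_gt_atTop 1] with ξ hξ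
  have hξ0 : 0 < ξ := one_pos.trans hξ
  have hs : √(ξ ^ 2 - 1) ^ 2 = ξ ^ 2 - 1 := Real.sq_sqrt (by nlinarith)
  have hs0 : 0 ≤ √(ξ ^ 2 - 1) := Real.sqrt_nonneg _
  have hlog : Real.log (1 + √(ξ ^ 2 - 1) / ξ) = Real.log (ξ + √(ξ ^ 2 - 1)) - Real.log ξ := by
    rw [← Real.log_div (by positivity) hξ0.ne', add_div, div_self hξ0.ne']
  simp only [Pi.div_apply, hlog]
  field_simp
  linear_combination (-ξ) * hs

lemma rpow_sq_sub_one_quarter {ξ : ℝ} (hξ : 1 < ξ) :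
    (ξ ^ 2 - 1) ^ ((1 : ℝ) / 4) = (1 - 1 / ξ ^ 2) ^ ((1 : ℝ) / 4) * √ξ := by
  have hξ0 : 0 < ξ := one_pos.trans hξ
  have hfac : ξ ^ 2 - 1 = (1 - 1 / ξ ^ 2) * ξ ^ 2 := by field_simp
  have hroot : (ξ ^ 2) ^ ((1 : ℝ) / 4) = √ξ := by
    rw [Real.sqrt_eq_rpow, ← Real.rpow_natCast, ← Real.rpow_mul hξ0.le]
    norm_num
  have hpos : 0 ≤ 1 - 1 / ξ ^ 2 := by
    rw [sub_nonneg, div_le_one (by positivity)]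
    nlinarith
  rw [hfac, Real.mul_rpow hpos (sq_nonneg ξ), hroot]

lemma exp_mul_sub_sq_add_log (n : ℕ) {ξ : ℝ} (hξ : 0 < ξ) (a : ℝ) :
    rexp ((2 * n + 1) * (a - ξ ^ 2 / 2 + 1 / 2 * Real.log ξ))
      = rexp ((2 * n + 1) * a) * rexp (-((2 * n + 1) * ξ ^ 2) / 2) * (ξ ^ n * √ξ) := by
  have hpow : ξ ^ n * √ξ = rexp ((n + 1 / 2) * Real.log ξ) := by
    rw [add_mul, Real.exp_add, Real.exp_nat_mul, Real.exp_log hξ, Real.sqrt_eq_rpow,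
      Real.rpow_def_of_pos hξ, mul_comm (Real.log ξ)]
  rw [hpow, ← Real.exp_add, ← Real.exp_add]
  ring_nf

lemma osc_sqrt_mul_eq (n : ℕ) {ξ : ℝ} (hξ : 1 < ξ) (a : ℝ) :
    osc n (√(2 * n + 1) * ξ) * (ξ ^ 2 - 1) ^ ((1 : ℝ) / 4) * rexp ((2 * n + 1) * a)
      = hNorm n ^ (-(1 : ℝ) / 2) * (physHermite n (√(2 * n + 1) * ξ) / ξ ^ n)
        * (1 - 1 / ξ ^ 2) ^ ((1 : ℝ) / 4)
        * rexp ((2 * n + 1) * (a - ξ ^ 2 / 2 + 1 / 2 * Real.log ξ)) := by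
  have hξ0 : 0 < ξ := one_pos.trans hξ
  have hsq : √(2 * n + 1 : ℝ) ^ 2 = 2 * n + 1 := Real.sq_sqrt (by positivity)
  rw [osc, rpow_sq_sub_one_quarter hξ, exp_mul_sub_sq_add_log n hξ0, mul_pow, hsq]
  field_simp

lemma two_mul_sqrt_pow_mul_exp (N : ℕ) :
    (2 * √(2 * N + 1)) ^ N * rexp ((2 * N + 1) * (-1 / 4 - Real.log 2 / 2))
      = (2 * ((N : ℝ) + 1 / 2)) ^ ((N : ℝ) / 2) * rexp (-((N : ℝ) + 1 / 2) / 2)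
        * (2 : ℝ) ^ ((N : ℝ) - ((N : ℝ) + 1 / 2)) := by
  have hκ : (0 : ℝ) ≤ 2 * N + 1 := by positivity
  have hsqrt : (2 * ((N : ℝ) + 1 / 2)) ^ ((N : ℝ) / 2) = √(2 * N + 1) ^ N := by
    rw [Real.sqrt_eq_rpow, ← Real.rpow_natCast, ← Real.rpow_mul hκ]
    ring_nf
  have hexp : rexp ((2 * N + 1) * (-1 / 4 - Real.log 2 / 2))
      = rexp (-((N : ℝ) + 1 / 2) / 2) / (2 : ℝ) ^ ((N : ℝ) + 1 / 2) := by
    rw [Real.rpow_def_of_pos two_pos, ← Real.exp_sub]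
    ring_nf
  rw [hsqrt, hexp, Real.rpow_sub two_pos, Real.rpow_natCast, mul_pow]
  ring_nf

theorem connection_coefficient_limit_general (N : ℕ) :
    Filter.Tendsto
      (fun ξ : ℝ =>
        osc N (Real.sqrt (2 * N + 1) * ξ) * (2 * Real.sqrt Real.pi) *
          (2 * (N : ℝ) + 1) ^ ((1 : ℝ) / 6) * (ξ ^ 2 - 1) ^ ((1 : ℝ) / 4) *
          Real.exp ((2 * (N : ℝ) + 1) *
            ((1 / 2) * ξ * Real.sqrt (ξ ^ 2 - 1) -
              (1 / 2) * Real.log (ξ + Real.sqrt (ξ ^ 2 - 1)))))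
      Filter.atTop
      (nhds (2 * Real.sqrt Real.pi * (2 * (N : ℝ) + 1) ^ ((1 : ℝ) / 6) *
        hNorm N ^ (-(1 : ℝ) / 2) * (2 * ((N : ℝ) + 1 / 2)) ^ ((N : ℝ) / 2) *
        Real.exp (-((N : ℝ) + 1 / 2) / 2) *
        (2 : ℝ) ^ ((N : ℝ) - ((N : ℝ) + 1 / 2)))) := by
  have hermite_part := tendsto_physHermite_const_mul_div_pow N
    (Real.sqrt_pos.2 (by positivity : (0 : ℝ) < 2 * N + 1))
  have algebraic_part : Tendsto (fun ξ : ℝ => (1 - 1 / ξ ^ 2) ^ ((1 : ℝ) / 4)) atTop (𝓝 1) := by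
    simpa using tendsto_one_sub_inv_sq.rpow_const (p := 1 / 4) (Or.inr (by norm_num))
  have exponential_part := (Real.continuous_exp.tendsto _).comp
    (tendsto_phase_sub_sq_add_log.const_mul (2 * N + 1 : ℝ))
  have hlim := ((((hermite_part.const_mul (hNorm N ^ (-(1 : ℝ) / 2))).mul
    algebraic_part).mul exponential_part).const_mul
      (2 * √π * (2 * (N : ℝ) + 1) ^ ((1 : ℝ) / 6)))
  rw [mul_one, mul_assoc _ (_ ^ N), two_mul_sqrt_pow_mul_exp] at hlim
  refine (hlim.congr' ?_).trans_eq (by ring_nf)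
  filter_upwards [eventually_gt_atTop 1] with ξ hξ
  simp only [Function.comp_apply]
  linear_combination (-(2 * √π * (2 * (N : ℝ) + 1) ^ ((1 : ℝ) / 6))) *
    osc_sqrt_mul_eq N hξ (1 / 2 * ξ * √(ξ ^ 2 - 1) - 1 / 2 * Real.log (ξ + √(ξ ^ 2 - 1)))

/-- Identification of the connection coefficient: with `κ = 2N+1` and `N₊ = N + ½`,
`φ_N(√κ ξ) · 2√π κ^{1/6} (ξ²-1)^{1/4} exp{κ(½ξ√(ξ²-1) - ½log(ξ+√(ξ²-1)))}` converges as
`ξ → ∞` to `2√π κ^{1/6} h_N^{-1/2} (2N₊)^{N/2} e^{-N₊/2} 2^{N-N₊}`. -/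
theorem connection_coefficient_limit (N : ℕ) (hN : 1 ≤ N) :
    Filter.Tendsto
      (fun ξ : ℝ =>
        osc N (Real.sqrt (2 * N + 1) * ξ) * (2 * Real.sqrt Real.pi) *
          (2 * (N : ℝ) + 1) ^ ((1 : ℝ) / 6) * (ξ ^ 2 - 1) ^ ((1 : ℝ) / 4) *
          Real.exp ((2 * (N : ℝ) + 1) *
            ((1 / 2) * ξ * Real.sqrt (ξ ^ 2 - 1) -
              (1 / 2) * Real.log (ξ + Real.sqrt (ξ ^ 2 - 1)))))
      Filter.atTop
      (nhds (2 * Real.sqrt Real.pi * (2 * (N : ℝ) + 1) ^ ((1 : ℝ) / 6) *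
        hNorm N ^ (-(1 : ℝ) / 2) * (2 * ((N : ℝ) + 1 / 2)) ^ ((N : ℝ) / 2) *
        Real.exp (-((N : ℝ) + 1 / 2) / 2) *
        (2 : ℝ) ^ ((N : ℝ) - ((N : ℝ) + 1 / 2)))) :=
  connection_coefficient_limit_general N
end
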